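/- arXiv:2302.05295 — 3 statements merged into one kernel-verified Lean document; each statement's English description precedes it below -/
import Mathlib

section
/- Let H ⊂ V = E ⊕ E* (dim V = 2N, N and p even) be the maximal isotropic subspace spanned by e_1,…,e_p together with g_j = f_j + Σ_{k=p+1}^{N} α_{kj} e_k for j = p+1,…,N, where A = (α_{kj}) is skew-symmetric of size N−p. Then the spinor a_H = Σ_{I ⊂ {p+1,…,N}} Pf(A_I) e_{[p]} ∧ e_I (sum over even-size index sets I, Pf(A_I) the Pfaffian of the submatrix of A with rows and columns in I, e_∅ := 1) satisfies h · a_H = 0 for every h ∈ H. -/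
/- Formalization of a statement about spinor varieties (Galgano, arXiv:2302.05295). -/

noncomputable section
open CliffordAlgebra

/-- The model for the maximal isotropic subspace `E`. -/
abbrev Evec (N : ℕ) := Fin N → ℂ

/-- The model for `V = E ⊕ E^∨`: a pair `(e, f)` represents `∑ eᵢ • eᵢ + ∑ fᵢ • fᵢ`. -/
abbrev Vsp (N : ℕ) := (Fin N → ℂ) × (Fin N → ℂ)

/-- The exterior algebra `⋀ E` hosting the (sums of half-) spin representations. -/
abbrev ExtE (N : ℕ) := ExteriorAlgebra ℂ (Evec N)

/-- `b ↦ (a ↦ ∑ aᵢ bᵢ)`, identifying `E` with its dual. -/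
def toDualMap (N : ℕ) : Evec N →ₗ[ℂ] Module.Dual ℂ (Evec N) where
  toFun b := ∑ i, b i • LinearMap.proj i
  map_add' x y := by simp [add_smul, Finset.sum_add_distrib]
  map_smul' c x := by simp [smul_smul, Finset.smul_sum]

/-- Clifford multiplication on the spinor module `⋀E` by an element
`v = (e, f) ∈ V = E ⊕ E^∨`: wedge by `e` plus contraction by `f`; bundled as a
linear map in `v`, for a fixed spinor `x`.  `psi x v = v ⋅ x`. -/
def psi {N : ℕ} (x : ExtE N) : Vsp N →ₗ[ℂ] ExtE N :=
  (LinearMap.mulRight ℂ x).comp ((ExteriorAlgebra.ι ℂ).comp (LinearMap.fst ℂ _ _)) +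
  ((CliffordAlgebra.contractLeft (Q := (0 : QuadraticForm ℂ (Evec N)))).flip x).comp
    ((toDualMap N).comp (LinearMap.snd ℂ _ _))

/-- The wedge product `e_I = e_{i₁} ∧ ⋯ ∧ e_{i_k}` over the sorted index set `I`. -/
def eI {N : ℕ} (I : Finset (Fin N)) : ExtE N :=
  ((I.sort (· ≤ ·)).map (fun i => ExteriorAlgebra.ι ℂ (Pi.single i 1))).prod

/-- The Pfaffian of an `n × n` complex matrix (intended for skew-symmetric matrices
of even size): `(1/(2^m m!)) ∑_σ sgn(σ) ∏ A_{σ(2i) σ(2i+1)}` with `m = n/2`. -/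
def pfaffian {n : ℕ} (A : Matrix (Fin n) (Fin n) ℂ) : ℂ :=
  (1 / ((2 : ℂ) ^ (n / 2) * (Nat.factorial (n / 2)))) *
    ∑ σ : Equiv.Perm (Fin n), ((Equiv.Perm.sign σ : ℤ) : ℂ) *
      ∏ i : Fin (n / 2),
        A (σ ⟨2 * i.1, by have := i.isLt; omega⟩) (σ ⟨2 * i.1 + 1, by have := i.isLt; omega⟩)

/-- The Pfaffian of the submatrix of `A` whose rows and columns are indexed by `I`. -/
def pfSub {N : ℕ} (A : Matrix (Fin N) (Fin N) ℂ) (I : Finset (Fin N)) : ℂ :=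
  pfaffian (A.submatrix (fun i => I.orderEmbOfFin rfl i) (fun i => I.orderEmbOfFin rfl i))

/-- The pure spinor `a_H = ∑_{I ⊆ {p+1,…,N}, |I| even} Pf(A_I) e_{[p]} ∧ e_I`
attached to the data `(p, α)`. -/
def aH (N p : ℕ) (α : Matrix (Fin N) (Fin N) ℂ) : ExtE N :=
  ∑ I : Finset (Fin N),
    if Even I.card ∧ ∀ i ∈ I, p ≤ i.1 then
      pfSub α I • (eI (Finset.univ.filter fun k : Fin N => k.1 < p) * eI I)
    else 0

/-!
Put `W = ∑_{k,l} α_{kl} e_k ∧ e_l`. Expanding `W^m` and grouping the terms by their support gives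
`W^m = 2^m m! ∑_{|I| = 2m} Pf(α_I) e_I`, so `∑_I Pf(α_I) e_I` is `exp(W/2)` (a finite sum, as `W` is
nilpotent) and `a_H = e_{[p]} ∧ exp(W/2)`: the extra terms with `I ∩ [p] ≠ ∅` vanish.
Contraction by `f_j` is a derivation on products with the even element `W`, and skew-symmetry of
`α` gives `f_j ⌟ W = -2 u_j` with `u_j = ∑_k α_{kj} e_k`; hence `f_j ⌟ exp(W/2) = -u_j ∧ exp(W/2)`,
i.e. `g_j` annihilates `exp(W/2)`. For `j > p` both `u_j ∧ ·` and `f_j ⌟ ·` pass `e_{[p]}` with the same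
sign `(-1)^p`, so `g_j · a_H = 0`, while `e_i ∧ e_{[p]} = 0` for `i ≤ p`.
-/

open Finset ExteriorAlgebra

namespace Matrix

variable {κ R : Type*} [CommMonoid R]

def pairProd (A : Matrix κ κ R) {m : ℕ} (g : Fin (2 * m) → κ) : R :=
  ∏ i : Fin m, A (g ⟨2 * i, by omega⟩) (g ⟨2 * i + 1, by omega⟩)

theorem pairProd_cons_cons (A : Matrix κ κ R) (k l : κ) {m : ℕ} (g : Fin (2 * m) → κ) :
    A.pairProd (m := m + 1) (Fin.cons k (Fin.cons l g)) = A k l * A.pairProd g := by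
  rw [pairProd, Fin.prod_univ_succ]
  rfl

end Matrix

namespace ExteriorAlgebra

variable {R M : Type*} [CommRing R] [AddCommGroup M] [Module R M]

local infixl:70 "⌋" => CliffordAlgebra.contractLeft (Q := (0 : QuadraticForm R M))

theorem ι_mul_ι_eq_neg (x y : M) : ι R x * ι R y = -(ι R y * ι R x) :=
  eq_neg_of_add_eq_zero_left (ι_add_mul_swap x y)

theorem commute_ι_ι_mul_ι (v a b : M) : Commute (ι R v) (ι R a * ι R b) := by
  rw [Commute, SemiconjBy, ← mul_assoc, ι_mul_ι_eq_neg v a, neg_mul, mul_assoc,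
    ι_mul_ι_eq_neg v b, mul_neg, neg_neg, mul_assoc]

theorem ι_mul_prod_map_ι (v : M) (l : List M) :
    ι R v * (l.map (ι R)).prod = (-1 : R) ^ l.length • ((l.map (ι R)).prod * ι R v) := by
  induction l with
  | nil => simp
  | cons a l ih =>
    rw [List.map_cons, List.prod_cons, ← mul_assoc, ι_mul_ι_eq_neg, neg_mul, mul_assoc, ih,
      mul_smul_comm, List.length_cons, pow_succ, mul_neg_one, neg_smul, mul_assoc]

theorem ι_mul_prod_map_ι_of_mem {v : M} {l : List M} (h : v ∈ l) :
    ι R v * (l.map (ι R)).prod = 0 := by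
  induction l with
  | nil => simp at h
  | cons a l ih =>
    rw [List.map_cons, List.prod_cons, ← mul_assoc]
    rcases List.mem_cons.mp h with rfl | h
    · rw [ι_sq_zero, zero_mul]
    · rw [ι_mul_ι_eq_neg, neg_mul, mul_assoc, ih h, mul_zero, neg_zero]

theorem prod_map_ι_eq_zero_of_not_nodup {l : List M} (h : ¬l.Nodup) :
    (l.map (ι R)).prod = 0 := by
  induction l with
  | nil => simp at h
  | cons a l ih =>
    rw [List.map_cons, List.prod_cons]
    by_cases ha : a ∈ l
    · exact ι_mul_prod_map_ι_of_mem ha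
    · rw [ih (by simpa [ha] using h), mul_zero]

theorem contractLeft_ι_mul_ι (d : Module.Dual R M) (a b : M) :
    d⌋(ι R a * ι R b) = d a • ι R b - d b • ι R a := by
  change d⌋(CliffordAlgebra.ι 0 a * CliffordAlgebra.ι 0 b) = _
  rw [CliffordAlgebra.contractLeft_ι_mul, CliffordAlgebra.contractLeft_ι,
    Algebra.algebraMap_eq_smul_one, mul_smul_comm, mul_one]

theorem contractLeft_ι_mul_ι_mul (d : Module.Dual R M) (a b : M) (y : ExteriorAlgebra R M) :
    d⌋(ι R a * ι R b * y) = (d⌋(ι R a * ι R b)) * y + ι R a * ι R b * (d⌋y) := by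
  rw [contractLeft_ι_mul_ι, mul_assoc]
  change d⌋(CliffordAlgebra.ι 0 a * (CliffordAlgebra.ι 0 b * y)) = _
  rw [CliffordAlgebra.contractLeft_ι_mul, CliffordAlgebra.contractLeft_ι_mul, mul_sub,
    mul_smul_comm, sub_mul, smul_mul_assoc, smul_mul_assoc, mul_assoc]
  change _ = d a • (ι R b * y) - d b • (ι R a * y) + ι R a * (ι R b * _)
  abel

theorem contractLeft_prod_map_ι_mul (d : Module.Dual R M) {l : List M}
    (hd : ∀ x ∈ l, d x = 0) (y : ExteriorAlgebra R M) :
    d⌋((l.map (ι R)).prod * y) = (-1 : R) ^ l.length • ((l.map (ι R)).prod * (d⌋y)) := by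
  induction l with
  | nil => simp
  | cons a l ih =>
    rw [List.map_cons, List.prod_cons, mul_assoc]
    change d⌋(CliffordAlgebra.ι 0 a * _) = _
    rw [CliffordAlgebra.contractLeft_ι_mul, hd a List.mem_cons_self, zero_smul, zero_sub,
      ih fun x hx => hd x (List.mem_cons_of_mem a hx), mul_smul_comm, List.length_cons,
      pow_succ, mul_neg_one, neg_smul, mul_assoc]

section Bivector

variable {κ : Type*} [Fintype κ]

def bivector (α : Matrix κ κ R) (v : κ → M) : ExteriorAlgebra R M :=
  ∑ k, ∑ l, α k l • (ι R (v k) * ι R (v l))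

theorem commute_ι_bivector (u : M) (α : Matrix κ κ R) (v : κ → M) :
    Commute (ι R u) (bivector α v) :=
  Commute.sum_right _ _ _ fun _ _ => Commute.sum_right _ _ _ fun _ _ =>
    (commute_ι_ι_mul_ι u _ _).smul_right _

theorem contractLeft_bivector_mul (d : Module.Dual R M) (α : Matrix κ κ R) (v : κ → M)
    (y : ExteriorAlgebra R M) :
    d⌋(bivector α v * y) = (d⌋(bivector α v)) * y + bivector α v * (d⌋y) := by
  simp only [bivector, sum_mul, map_sum, smul_mul_assoc, map_smul, contractLeft_ι_mul_ι_mul,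
    smul_add, sum_add_distrib]

theorem contractLeft_bivector (d : Module.Dual R M) {α : Matrix κ κ R} (hα : α.transpose = -α)
    (v : κ → M) :
    d⌋(bivector α v) = (-2 : R) • ι R (∑ k, ∑ l, (α k l * d (v l)) • v k) := by
  have hα' (k l : κ) : α l k = -α k l := by simpa using congrFun (congrFun hα k) l
  have hswap : ∑ k, ∑ l, (α k l * d (v k)) • ι R (v l) =
      -∑ k, ∑ l, (α k l * d (v l)) • ι R (v k) := by
    rw [sum_comm, ← sum_neg_distrib]
    refine sum_congr rfl fun k _ => ?_
    rw [← sum_neg_distrib]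
    refine sum_congr rfl fun l _ => ?_
    rw [hα' k l, neg_mul, neg_smul]
  simp only [bivector, map_sum, map_smul, contractLeft_ι_mul_ι, smul_sub, smul_smul,
    sum_sub_distrib, hswap]
  rw [← sub_eq_zero]
  module

theorem bivector_pow (α : Matrix κ κ R) (v : κ → M) (m : ℕ) :
    bivector α v ^ m =
      ∑ g : Fin (2 * m) → κ, α.pairProd g • ιMulti R (2 * m) (v ∘ g) := by
  induction m with
  | zero => simp [Matrix.pairProd, ιMulti_zero_apply]
  | succ m ih =>
    rw [pow_succ', ih, bivector, sum_mul]
    change _ = ∑ g : Fin (2 * m + 1 + 1) → κ, _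
    rw [← (Fin.consEquiv fun _ => κ).sum_comp, Fintype.sum_prod_type]
    refine sum_congr rfl fun k _ => ?_
    rw [sum_mul, ← (Fin.consEquiv fun _ => κ).sum_comp, Fintype.sum_prod_type]
    refine sum_congr rfl fun l _ => ?_
    rw [smul_mul_assoc, mul_sum, smul_sum]
    refine sum_congr rfl fun g _ => ?_
    change _ = α.pairProd (m := m + 1) (Fin.cons k (Fin.cons l g)) •
      ιMulti R (2 * m + 1 + 1) (v ∘ Fin.cons k (Fin.cons l g))
    rw [Matrix.pairProd_cons_cons, Fin.comp_cons, Fin.comp_cons, ιMulti_succ_apply,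
      ιMulti_succ_apply, mul_smul_comm, smul_smul, mul_assoc]
    rfl

theorem bivector_pow_eq_zero (α : Matrix κ κ R) (v : κ → M) {m : ℕ}
    (hm : Fintype.card κ < 2 * m) : bivector α v ^ m = 0 := by
  rw [bivector_pow]
  refine sum_eq_zero fun g _ => ?_
  have hg : ¬ Function.Injective g := fun hg => by
    simpa using (Fintype.card_le_of_injective g hg).trans_lt hm
  rw [ιMulti_eq_zero_of_not_inj fun h => hg h.of_comp, smul_zero]

end Bivector

end ExteriorAlgebra

section TruncatedExp

variable (K : Type*) {A : Type*} [Field K] [Ring A] [Algebra K A]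

def truncExpHalf (n : ℕ) (W : A) : A :=
  ∑ m ∈ range n, ((2 : K) ^ m * m.factorial)⁻¹ • W ^ m

variable {K}

theorem map_pow_succ_of_derivation (D : A →ₗ[K] A) {W : A}
    (hder : ∀ y, D (W * y) = D W * y + W * D y) (hcomm : Commute W (D W)) (m : ℕ) :
    D (W ^ (m + 1)) = (m + 1) • (D W * W ^ m) := by
  induction m with
  | zero => simp
  | succ m ih =>
    rw [pow_succ' W (m + 1), hder, ih, mul_smul_comm, ← mul_assoc, hcomm.eq, mul_assoc,
      ← pow_succ', succ_nsmul' _ (m + 1)]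

theorem mul_truncExpHalf_add_map_eq_zero [CharZero K] (D : A →ₗ[K] A) {W x : A}
    (hder : ∀ y, D (W * y) = D W * y + W * D y) (hD1 : D 1 = 0)
    (hDW : D W = (-2 : K) • x) (hxW : Commute x W) {n : ℕ} (hn : W ^ n = 0) :
    x * truncExpHalf K (n + 1) W + D (truncExpHalf K (n + 1) W) = 0 := by
  have hcomm : Commute W (D W) := hDW ▸ hxW.symm.smul_right _
  have hD : D (truncExpHalf K (n + 1) W) =
      -(x * ∑ m ∈ range n, ((2 : K) ^ m * m.factorial)⁻¹ • W ^ m) := by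
    rw [truncExpHalf, map_sum, sum_range_succ', map_smul, pow_zero W, hD1, smul_zero, add_zero,
      mul_sum, ← sum_neg_distrib]
    refine sum_congr rfl fun m _ => ?_
    rw [map_smul, map_pow_succ_of_derivation D hder hcomm, hDW, smul_mul_assoc,
      ← Nat.cast_smul_eq_nsmul K, smul_smul, smul_smul, mul_smul_comm, ← neg_smul]
    congr 1
    rw [Nat.factorial_succ, pow_succ]
    push_cast
    field_simp
  rw [hD, truncExpHalf, sum_range_succ, hn, smul_zero, add_zero, add_neg_cancel]

end TruncatedExp

theorem Finset.sum_filter_image_eq_sum_perm {κ X : Type*} [Fintype κ] [LinearOrder κ]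
    [AddCommMonoid X] (I : Finset κ) {k : ℕ} (h : I.card = k) (F : (Fin k → κ) → X) :
    ∑ g with univ.image g = I, F g =
      ∑ σ : Equiv.Perm (Fin k), F (I.orderEmbOfFin h ∘ σ) := by
  set e := I.orderEmbOfFin h
  have he : (univ.image fun σ : Equiv.Perm (Fin k) => e ∘ σ) =
      ({g | univ.image g = I} : Finset (Fin k → κ)) := by
    ext g
    simp only [mem_image, mem_univ, true_and, mem_filter]
    constructor
    · rintro ⟨σ, rfl⟩
      rw [← image_image, image_univ_equiv, ← coe_inj, coe_image, coe_univ, Set.image_univ,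
        range_orderEmbOfFin]
    · intro hg
      have hmem (t : Fin k) : g t ∈ I := hg ▸ mem_image_of_mem g (mem_univ t)
      have hinj : Function.Injective g := by
        rw [← Set.injOn_univ, ← coe_univ, ← card_image_iff, hg, h, card_univ,
          Fintype.card_fin]
      let σ₀ : Fin k → Fin k := fun t => (I.orderIsoOfFin h).symm ⟨g t, hmem t⟩
      have hσ₀ (t : Fin k) : e (σ₀ t) = g t := by
        simp [σ₀, e, ← coe_orderIsoOfFin_apply]
      have hinj' : Function.Injective σ₀ := fun a b hab => hinj (by rw [← hσ₀, hab, hσ₀])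
      exact ⟨Equiv.ofBijective σ₀ hinj'.bijective_of_finite, funext hσ₀⟩
  have hinj : Function.Injective fun σ : Equiv.Perm (Fin k) => e ∘ σ :=
    fun σ τ hστ => Equiv.ext fun t => e.injective (congrFun hστ t)
  rw [← he, sum_image hinj.injOn]

theorem two_pow_mul_factorial_mul_pfaffian {m : ℕ} (A : Matrix (Fin (2 * m)) (Fin (2 * m)) ℂ) :
    (2 ^ m * m.factorial) * pfaffian A =
      ∑ σ : Equiv.Perm (Fin (2 * m)), (Equiv.Perm.sign σ : ℂ) * A.pairProd σ := by
  have h2 : 2 * m / 2 = m := by omega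
  have hprod (σ : Equiv.Perm (Fin (2 * m))) :
      ∏ i : Fin (2 * m / 2), A (σ ⟨2 * i, by omega⟩) (σ ⟨2 * i + 1, by omega⟩) =
        A.pairProd σ :=
    Fintype.prod_equiv (finCongr h2) _ _ fun i => rfl
  simp only [pfaffian, hprod]
  rw [← mul_assoc, h2, mul_one_div_cancel (by simp [Nat.factorial_ne_zero]), one_mul]

theorem eI_eq_ιMulti {N k : ℕ} (I : Finset (Fin N)) (h : I.card = k) :
    eI I = ιMulti ℂ k ((Pi.single · 1) ∘ I.orderEmbOfFin h) := by
  rw [eI, ιMulti_apply]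
  congr 1
  apply List.ext_getElem
  · simp [h]
  · intro t h1 h2
    simp [Finset.orderEmbOfFin_apply, Fin.getElem_fin]

theorem pfSub_eq_pfaffian {N k : ℕ} (α : Matrix (Fin N) (Fin N) ℂ) (I : Finset (Fin N))
    (h : I.card = k) :
    pfSub α I = pfaffian (α.submatrix (I.orderEmbOfFin h) (I.orderEmbOfFin h)) := by
  subst h
  rfl

theorem bivector_pow_eq_sum_pfSub {N : ℕ} (α : Matrix (Fin N) (Fin N) ℂ) (m : ℕ) :
    bivector α (Pi.single · 1 : Fin N → Evec N) ^ m =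
      ∑ I with I.card = 2 * m, (2 ^ m * m.factorial * pfSub α I) • eI I := by
  rw [bivector_pow, ← sum_fiberwise univ fun g : Fin (2 * m) → Fin N => univ.image g,
    sum_filter]
  refine sum_congr rfl fun I _ => ?_
  split_ifs with hI
  · rw [sum_filter_image_eq_sum_perm I hI, eI_eq_ιMulti I hI, pfSub_eq_pfaffian α I hI,
      two_pow_mul_factorial_mul_pfaffian, sum_smul]
    refine sum_congr rfl fun σ _ => ?_
    rw [← Function.comp_assoc, AlternatingMap.map_perm, Units.smul_def,
      ← Int.cast_smul_eq_zsmul ℂ, smul_smul, mul_comm]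
    rfl
  · refine sum_eq_zero fun g hg => ?_
    have hg : ¬ Function.Injective g := fun hinj => hI <| by
      rw [← (mem_filter.mp hg).2, card_image_of_injective _ hinj, card_univ, Fintype.card_fin]
    rw [ιMulti_eq_zero_of_not_inj fun h => hg h.of_comp, smul_zero]

section Spinor

variable {N : ℕ}

def pfSpinor (α : Matrix (Fin N) (Fin N) ℂ) : ExtE N :=
  ∑ I : Finset (Fin N) with Even I.card, pfSub α I • eI I

theorem truncExpHalf_bivector {n : ℕ} (hn : N < 2 * n) (α : Matrix (Fin N) (Fin N) ℂ) :
    truncExpHalf ℂ n (bivector α (Pi.single · 1 : Fin N → Evec N)) = pfSpinor α := by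
  have hmaps : ∀ I ∈ ({I | Even I.card} : Finset (Finset (Fin N))), I.card / 2 ∈ range n := by
    intro I _
    have := card_le_univ I
    simp only [Fintype.card_fin, mem_range] at this ⊢
    omega
  rw [truncExpHalf, pfSpinor, ← sum_fiberwise_of_maps_to hmaps]
  refine sum_congr rfl fun m _ => ?_
  have hfiber : ({I | Even I.card} : Finset (Finset (Fin N))).filter (fun I => I.card / 2 = m) =
      ({I | I.card = 2 * m} : Finset (Finset (Fin N))) := by
    ext I
    simp only [mem_filter, mem_univ, true_and, Nat.even_iff]
    omega
  rw [hfiber, bivector_pow_eq_sum_pfSub, smul_sum]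
  refine sum_congr rfl fun I _ => ?_
  rw [smul_smul, inv_mul_cancel_left₀ (by simp [Nat.factorial_ne_zero])]

theorem eI_eq_prod_map_ι (I : Finset (Fin N)) :
    eI I = (((I.sort (· ≤ ·)).map (Pi.single · 1 : Fin N → Evec N)).map
      (ExteriorAlgebra.ι ℂ)).prod := by
  rw [eI, List.map_map]
  rfl

theorem eI_mul_eI_eq_zero {I J : Finset (Fin N)} (h : ¬Disjoint I J) : eI I * eI J = 0 := by
  rw [eI_eq_prod_map_ι, eI_eq_prod_map_ι, ← List.prod_append, ← List.map_append,
    prod_map_ι_eq_zero_of_not_nodup]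
  intro hnd
  obtain ⟨i, hiI, hiJ⟩ := not_disjoint_iff.mp h
  rw [← List.map_append] at hnd
  exact (List.nodup_append.mp (hnd.of_map _)).2.2 i (by simpa using hiI) i (by simpa using hiJ)
    rfl

theorem aH_eq_eI_mul_pfSpinor (p : ℕ) (α : Matrix (Fin N) (Fin N) ℂ) :
    aH N p α = eI {k | k.1 < p} * pfSpinor α := by
  rw [aH, pfSpinor, mul_sum, sum_filter]
  refine sum_congr rfl fun I _ => ?_
  by_cases hI : Even I.card
  · rw [if_pos hI, mul_smul_comm]
    split_ifs with hp
    · rfl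
    · obtain ⟨i, hiI, hip⟩ : ∃ i ∈ I, i.1 < p := by simpa [hI] using hp
      rw [eI_mul_eI_eq_zero (not_disjoint_iff.mpr ⟨i, by simpa using hip, hiI⟩), smul_zero]
  · rw [if_neg hI, if_neg fun h => hI h.1]

end Spinor

section Clifford

variable {N : ℕ}

theorem psi_apply (x : ExtE N) (a b : Evec N) :
    psi x (a, b) = ExteriorAlgebra.ι ℂ a * x + contractLeft (toDualMap N b) x :=
  rfl

theorem toDualMap_single_apply (j : Fin N) (x : Evec N) :
    toDualMap N (Pi.single j 1) x = x j := by
  simp [toDualMap, Pi.single_apply]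

theorem psi_eI_mul_of_mem {P : Finset (Fin N)} {i : Fin N} (hi : i ∈ P) (x : ExtE N) :
    psi (eI P * x) (Pi.single i 1, 0) = 0 := by
  rw [psi_apply, map_zero, map_zero, LinearMap.zero_apply, add_zero, ← mul_assoc,
    eI_eq_prod_map_ι, ι_mul_prod_map_ι_of_mem
      (List.mem_map_of_mem (f := (Pi.single · 1 : Fin N → Evec N)) ((mem_sort _).mpr hi)),
    zero_mul]

theorem psi_eI_mul_of_notMem {P : Finset (Fin N)} {j : Fin N} (hj : j ∉ P) (x : ExtE N)
    (u : Evec N) :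
    psi (eI P * x) (u, Pi.single j 1) =
      (-1 : ℂ) ^ P.card • (eI P * psi x (u, Pi.single j 1)) := by
  have hd : ∀ y ∈ (P.sort (· ≤ ·)).map (Pi.single · 1 : Fin N → Evec N),
      toDualMap N (Pi.single j 1) y = 0 := by
    simp only [List.mem_map, mem_sort, forall_exists_index, and_imp]
    rintro _ i hi rfl
    rw [toDualMap_single_apply, Pi.single_eq_of_ne (ne_of_mem_of_not_mem hi hj).symm]
  rw [psi_apply, psi_apply, ← mul_assoc, eI_eq_prod_map_ι, ι_mul_prod_map_ι,
    contractLeft_prod_map_ι_mul _ hd, smul_mul_assoc, ← smul_add, mul_add,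
    mul_assoc, List.length_map, length_sort]

theorem psi_pfSpinor_eq_zero {α : Matrix (Fin N) (Fin N) ℂ} (hα : α.transpose = -α)
    (j : Fin N) :
    psi (pfSpinor α) (fun k => α k j, Pi.single j 1) = 0 := by
  set d := toDualMap N (Pi.single j 1)
  have hDW : contractLeft d (bivector α (Pi.single · 1 : Fin N → Evec N)) =
      (-2 : ℂ) • ExteriorAlgebra.ι ℂ (fun k => α k j) := by
    rw [contractLeft_bivector _ hα]
    congr
    ext k
    simp [d, toDualMap_single_apply, Pi.single_apply, Finset.sum_apply]
  rw [← truncExpHalf_bivector (n := N + 1 + 1) (by omega), psi_apply]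
  exact mul_truncExpHalf_add_map_eq_zero (contractLeft d)
    (contractLeft_bivector_mul d _ _) (contractLeft_one (Q := 0) d) hDW
    (commute_ι_bivector _ _ _) (bivector_pow_eq_zero _ _ (by simp; omega))

end Clifford

theorem stmt2_general (N p : ℕ)
    (α : Matrix (Fin N) (Fin N) ℂ) (hskew : α.transpose = -α) :
    ∀ h ∈ Submodule.span ℂ
      ({v : Vsp N | ∃ i : Fin N, i.1 < p ∧ v = (Pi.single i 1, 0)} ∪
       {v : Vsp N | ∃ j : Fin N, p ≤ j.1 ∧ v = ((fun k => α k j), Pi.single j 1)}),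
      psi (aH N p α) h = 0 := by
  intro h hh
  refine LinearMap.mem_ker.mp (Submodule.span_le.mpr ?_ hh)
  rw [aH_eq_eI_mul_pfSpinor]
  rintro v (⟨i, hi, rfl⟩ | ⟨j, hj, rfl⟩)
  · exact psi_eI_mul_of_mem (by simpa using hi) _
  · rw [SetLike.mem_coe, LinearMap.mem_ker, psi_eI_mul_of_notMem (by simpa using hj),
      psi_pfSpinor_eq_zero hskew, mul_zero, smul_zero]

/-- Let `H ⊆ V = E ⊕ E^∨` be the maximal isotropic subspace spanned by
`e_1, …, e_p` and `g_j = f_j + ∑_{k > p} α_{kj} e_k` (`j > p`), with `α` skew-symmetric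
supported on `{p+1,…,N}`.  Then the spinor
`a_H = ∑_I Pf(α_I) e_{[p]} ∧ e_I` is annihilated by Clifford multiplication by every
element of `H`. -/
theorem stmt2 (N p : ℕ) (hp : p ≤ N) (hNe : Even N) (hpe : Even p)
    (α : Matrix (Fin N) (Fin N) ℂ) (hskew : α.transpose = -α)
    (hsupp : ∀ k j : Fin N, k.1 < p ∨ j.1 < p → α k j = 0) :
    ∀ h ∈ Submodule.span ℂ
      ({v : Vsp N | ∃ i : Fin N, i.1 < p ∧ v = (Pi.single i 1, 0)} ∪
       {v : Vsp N | ∃ j : Fin N, p ≤ j.1 ∧ v = ((fun k => α k j), Pi.single j 1)}),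
      psi (aH N p α) h = 0 :=
  stmt2_general N p α hskew
end
end

section
/- The orbit of the rank-2l skew-symmetric N×N complex matrices under GL(N,ℂ) acting by congruence (A ↦ gAgᵀ) has dimension l(2N−1) − 2l²; equivalently, the stabilizer of the standard rank-2l skew-symmetric matrix C_l in GL(N,ℂ) has dimension N² − l(2N−1) + 2l². -/
/-
Write `C = C_l`. It is skew with `C³ = -C`, and `Q = 1 + C²` is the diagonal projection onto the
last `N - 2l` coordinates, so `Q C = C Q = 0`. Hence every `X C + C Xᵀ` is skew and satisfies
`Q (X C + C Xᵀ) Q = 0`; conversely a skew `M` with `Q M Q = 0` is `X C + C Xᵀ` for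
`X = -½ (2 + C²) M C`, because that expression expands to `M - Q M Q`. So the tangent space is the
space of skew matrices vanishing on the lower right `(N - 2l)`-block, whose free entries are the
`(i, j)` with `i < j` and `i < 2l`: there are `∑_{i < 2l} (N - 1 - i) = l(2N - 1) - 2l²` of them.
The stabilizer dimension then follows by rank–nullity.
-/

noncomputable section
open Matrix

/-- The standard skew-symmetric matrix `C_l` of rank `2l`: block diagonal with `l`
blocks `[[0,1],[-1,0]]` and a zero block of size `N - 2l`. -/
def Cmat (N l : ℕ) : Matrix (Fin N) (Fin N) ℂ := fun i j =>
  if i.1 < 2 * l ∧ j.1 = i.1 + 1 ∧ Even i.1 then 1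
  else if j.1 < 2 * l ∧ i.1 = j.1 + 1 ∧ Even j.1 then -1 else 0

/-- The differential at the identity of the congruence action `g ↦ g C gᵀ` of
`GL(N, ℂ)` on `C`: `X ↦ X C + C Xᵀ`.  Its range is the tangent space at `C` to the
congruence orbit of `C`, and its kernel is the Lie algebra of the stabilizer of `C`. -/
def congDiff (N : ℕ) (C : Matrix (Fin N) (Fin N) ℂ) :
    Matrix (Fin N) (Fin N) ℂ →ₗ[ℂ] Matrix (Fin N) (Fin N) ℂ where
  toFun X := X * C + C * Xᵀ
  map_add' X Y := by
    simp [Matrix.add_mul, Matrix.mul_add, Matrix.transpose_add]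
    abel
  map_smul' c X := by
    simp [Matrix.transpose_smul, Matrix.smul_mul, Matrix.mul_smul, smul_add]

section CongruenceDifferential

variable {N : ℕ} {C : Matrix (Fin N) (Fin N) ℂ}

theorem congDiff_apply (X : Matrix (Fin N) (Fin N) ℂ) : congDiff N C X = X * C + C * Xᵀ := rfl

theorem congDiff_mem_range_iff (hskew : Cᵀ = -C) (hcube : C * C * C = -C)
    (M : Matrix (Fin N) (Fin N) ℂ) :
    M ∈ LinearMap.range (congDiff N C) ↔ Mᵀ = -M ∧ (1 + C * C) * M * (1 + C * C) = 0 := by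
  have hQC : (1 + C * C) * C = 0 := by rw [add_mul, one_mul, hcube, add_neg_cancel]
  have hCQ : C * (1 + C * C) = 0 := by rw [mul_add, mul_one, ← mul_assoc, hcube, add_neg_cancel]
  constructor
  · rintro ⟨X, rfl⟩
    refine ⟨?_, ?_⟩
    · rw [congDiff_apply, transpose_add, transpose_mul, transpose_mul, transpose_transpose, hskew]
      noncomm_ring
    · generalize 1 + C * C = Q at hQC hCQ ⊢
      calc Q * (X * C + C * Xᵀ) * Q = Q * X * (C * Q) + Q * C * (Xᵀ * Q) := by noncomm_ring
        _ = 0 := by rw [hQC, hCQ]; simp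
  · rintro ⟨hM, hQMQ⟩
    refine ⟨-(1 / 2 : ℂ) • ((2 + C * C) * M * C), ?_⟩
    have hsum : (2 + C * C) * M * C * C + C * (-C * (-M * (2 + C * C))) =
        (2 : ℂ) • ((1 + C * C) * M * (1 + C * C) - M) := by
      rw [two_smul]; noncomm_ring
    rw [congDiff_apply, transpose_smul, transpose_mul, transpose_mul, hM, hskew, transpose_add,
      transpose_mul, hskew, transpose_ofNat, neg_mul_neg, smul_mul_assoc, mul_smul_comm,
      ← smul_add, hsum, hQMQ, smul_smul]
    norm_num

end CongruenceDifferential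

section SkewVanishing

theorem diagonal_ite_mul_mul_diagonal_ite_eq_zero_iff {ι R : Type*} [Fintype ι] [DecidableEq ι]
    [Semiring R] (p : ι → Prop) [DecidablePred p] (M : Matrix ι ι R) :
    (diagonal fun i => if p i then (1 : R) else 0) * M * (diagonal fun i => if p i then 1 else 0)
      = 0 ↔ ∀ i j, p i → p j → M i j = 0 := by
  simp only [← Matrix.ext_iff, diagonal_mul, mul_diagonal, Matrix.zero_apply]
  refine forall_congr' fun i => forall_congr' fun j => ?_
  by_cases hi : p i <;> by_cases hj : p j <;> simp [hi, hj]

variable {ι K : Type*} [Field K]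

variable (K) in
def skewVanishingOn (p : ι → Prop) : Submodule K (Matrix ι ι K) where
  carrier := {M | Mᵀ = -M ∧ ∀ i j, p i → p j → M i j = 0}
  add_mem' := by
    rintro A B ⟨hA, hA0⟩ ⟨hB, hB0⟩
    refine ⟨by rw [transpose_add, hA, hB, neg_add], fun i j hi hj => ?_⟩
    rw [Matrix.add_apply, hA0 i j hi hj, hB0 i j hi hj, add_zero]
  zero_mem' := ⟨by rw [transpose_zero, neg_zero], fun _ _ _ _ => rfl⟩
  smul_mem' := by
    rintro c A ⟨hA, hA0⟩
    refine ⟨by rw [transpose_smul, hA, smul_neg], fun i j hi hj => ?_⟩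
    rw [Matrix.smul_apply, hA0 i j hi hj, smul_zero]

theorem mem_skewVanishingOn_iff {p : ι → Prop} {M : Matrix ι ι K} :
    M ∈ skewVanishingOn K p ↔ Mᵀ = -M ∧ ∀ i j, p i → p j → M i j = 0 := Iff.rfl

variable [LinearOrder ι]

def skewVanishingOn.freeEntries (p : ι → Prop) :
    skewVanishingOn K p →ₗ[K] ({q : ι × ι // q.1 < q.2 ∧ ¬(p q.1 ∧ p q.2)} → K) where
  toFun M q := M.1 q.1.1 q.1.2
  map_add' _ _ := rfl
  map_smul' _ _ := rfl

theorem skewVanishingOn.freeEntries_injective [NeZero (2 : K)] (p : ι → Prop) :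
    Function.Injective (skewVanishingOn.freeEntries (K := K) p) := by
  rw [injective_iff_map_eq_zero]
  rintro ⟨M, hskew, hzero⟩ hfree
  have hsym (i j : ι) : M j i = -M i j := congr_fun₂ hskew i j
  have hupper (i j : ι) (hij : i < j) : M i j = 0 := by
    by_cases hp : p i ∧ p j
    · exact hzero i j hp.1 hp.2
    · exact congr_fun hfree ⟨(i, j), hij, hp⟩
  refine Subtype.ext (Matrix.ext fun i j => ?_)
  change M i j = 0
  rcases lt_trichotomy i j with hij | rfl | hij
  · exact hupper i j hij
  · have hdiag : (2 : K) * M i i = 0 := by rw [two_mul]; nth_rw 1 [hsym]; exact neg_add_cancel _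
    exact (mul_eq_zero.mp hdiag).resolve_left two_ne_zero
  · rw [hsym j i, hupper j i hij, neg_zero]

theorem skewVanishingOn.freeEntries_surjective (p : ι → Prop) :
    Function.Surjective (skewVanishingOn.freeEntries (K := K) p) := by
  classical
  intro f
  let M : Matrix ι ι K := fun i j =>
    if h : i < j ∧ ¬(p i ∧ p j) then f ⟨(i, j), h⟩
    else if h' : j < i ∧ ¬(p j ∧ p i) then -f ⟨(j, i), h'⟩ else 0
  have hskew : Mᵀ = -M := by
    ext i j
    change M j i = -M i j
    simp only [M]
    split_ifs with h₁ h₂ <;> first | rfl | simp | exact absurd h₂.1 (lt_asymm h₁.1)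
  have hzero (i j : ι) (hi : p i) (hj : p j) : M i j = 0 := by
    simp [M, hi, hj]
  exact ⟨⟨M, hskew, hzero⟩, funext fun q => dif_pos q.2⟩

theorem finrank_skewVanishingOn [NeZero (2 : K)] [Fintype ι] (p : ι → Prop) [DecidablePred p] :
    Module.finrank K (skewVanishingOn K p)
      = Fintype.card {q : ι × ι // q.1 < q.2 ∧ ¬(p q.1 ∧ p q.2)} :=
  (LinearEquiv.ofBijective _ ⟨skewVanishingOn.freeEntries_injective p,
    skewVanishingOn.freeEntries_surjective p⟩).finrank_eq.trans
      (Module.finrank_fintype_fun_eq_card K)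

end SkewVanishing

section Cmat

variable {N l : ℕ}

theorem Cmat_transpose : (Cmat N l)ᵀ = -Cmat N l := by
  ext i j
  simp only [transpose_apply, Matrix.neg_apply, Cmat, Nat.even_iff]
  split_ifs <;> first | ring1 | omega

theorem Cmat_apply_of_le {i : Fin N} (hi : 2 * l ≤ i.1) (j : Fin N) : Cmat N l i j = 0 := by
  simp only [Cmat, Nat.even_iff]
  split_ifs <;> first | rfl | omega

-- `i + 1 - 2 (i % 2)` is `i + 1` for even `i` and `i - 1` for odd `i`.
theorem Cmat_apply_of_ne_partner {i j : Fin N} (hj : j.1 ≠ i.1 + 1 - 2 * (i.1 % 2)) :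
    Cmat N l i j = 0 := by
  simp only [Cmat, Nat.even_iff]
  split_ifs <;> first | rfl | omega

theorem one_add_Cmat_mul_Cmat (h2l : 2 * l ≤ N) :
    1 + Cmat N l * Cmat N l = diagonal fun i => if 2 * l ≤ i.1 then 1 else 0 := by
  ext i j
  rw [Matrix.add_apply, mul_apply, one_apply, diagonal_apply]
  by_cases hi : 2 * l ≤ i.1
  · simp [hi, Cmat_apply_of_le hi]
  · let k : Fin N := ⟨i.1 + 1 - 2 * (i.1 % 2), by omega⟩
    rw [Finset.sum_eq_single k (fun b _ hb => by
      rw [Cmat_apply_of_ne_partner (fun h => hb (Fin.ext h)), zero_mul]) (by simp)]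
    simp only [Cmat, k, Fin.ext_iff, Nat.even_iff, hi]
    split_ifs <;> first | ring1 | contradiction | omega

theorem Cmat_mul_Cmat_mul_Cmat (h2l : 2 * l ≤ N) :
    Cmat N l * Cmat N l * Cmat N l = -Cmat N l := by
  have hDC : (1 + Cmat N l * Cmat N l) * Cmat N l = 0 := by
    ext i j
    rw [one_add_Cmat_mul_Cmat h2l, diagonal_mul]
    split_ifs with hi
    · rw [Cmat_apply_of_le hi, mul_zero, Matrix.zero_apply]
    · rw [zero_mul, Matrix.zero_apply]
  rwa [add_mul, one_mul, add_eq_zero_iff_eq_neg'] at hDC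

end Cmat

theorem sum_range_two_mul_sub {N l : ℕ} (h2l : 2 * l ≤ N) :
    ∑ k ∈ Finset.range (2 * l), (N - 1 - k) = l * (2 * N - 1) - 2 * l ^ 2 := by
  induction l with
  | zero => simp
  | succ l ih =>
    have hle (m : ℕ) (hm : 2 * m ≤ N) : 2 * m ^ 2 ≤ m * (2 * N - 1) := by
      rw [sq, mul_comm 2, mul_assoc]; exact Nat.mul_le_mul_left m (by omega)
    have hstep : (l + 1) * (2 * N - 1) - 2 * (l + 1) ^ 2
        = l * (2 * N - 1) - 2 * l ^ 2 + (2 * N - (4 * l + 3)) := by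
      zify [hle l (by omega), hle (l + 1) h2l, show 1 ≤ 2 * N by omega,
        show 4 * l + 3 ≤ 2 * N by omega]
      ring
    rw [show 2 * (l + 1) = 2 * l + 1 + 1 by ring, Finset.sum_range_succ, Finset.sum_range_succ,
      ih (by omega), hstep]
    omega

theorem card_upper_pairs_not_both_ge {N l : ℕ} (h2l : 2 * l ≤ N) :
    Fintype.card {q : Fin N × Fin N // q.1 < q.2 ∧ ¬(2 * l ≤ q.1.1 ∧ 2 * l ≤ q.2.1)}
      = l * (2 * N - 1) - 2 * l ^ 2 := by
  rw [Fintype.card_congr (Equiv.subtypeProdEquivSigmaSubtype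
    fun (a b : Fin N) => a < b ∧ ¬(2 * l ≤ a.1 ∧ 2 * l ≤ b.1)), Fintype.card_sigma]
  have hrow (i : Fin N) : Fintype.card {j : Fin N // i < j ∧ ¬(2 * l ≤ i.1 ∧ 2 * l ≤ j.1)}
      = if i.1 < 2 * l then N - 1 - i.1 else 0 := by
    rw [Fintype.card_subtype]
    split_ifs with hi
    · rw [← Fin.card_Ioi]
      congr 1
      ext j
      simp only [Finset.mem_filter, Finset.mem_univ, true_and, Finset.mem_Ioi]
      omega
    · rw [Finset.card_eq_zero, Finset.filter_eq_empty_iff]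
      intro j _
      omega
  have hfilter : (Finset.range N).filter (· < 2 * l) = Finset.range (2 * l) := by
    ext k
    simp only [Finset.mem_filter, Finset.mem_range]
    omega
  simp_rw [hrow]
  rw [Fin.sum_univ_eq_sum_range (fun k => if k < 2 * l then N - 1 - k else 0),
    ← Finset.sum_filter, hfilter, sum_range_two_mul_sub h2l]

theorem range_congDiff_Cmat {N l : ℕ} (h2l : 2 * l ≤ N) :
    LinearMap.range (congDiff N (Cmat N l))
      = skewVanishingOn ℂ fun i : Fin N => 2 * l ≤ i.1 := by
  ext M
  rw [congDiff_mem_range_iff Cmat_transpose (Cmat_mul_Cmat_mul_Cmat h2l),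
    one_add_Cmat_mul_Cmat h2l, diagonal_ite_mul_mul_diagonal_ite_eq_zero_iff,
    mem_skewVanishingOn_iff]

/-- The `GL(N, ℂ)`-congruence orbit of the rank-`2l` skew-symmetric
matrix `C_l` has dimension `l(2N-1) - 2l²`; equivalently, the stabilizer of `C_l` has
dimension `N² - l(2N-1) + 2l²`.  (Dimensions are computed as the ranks of the tangent
map `X ↦ X C_l + C_l Xᵀ` at the identity and of its kernel.) -/
theorem stmt15 (N l : ℕ) (h2l : 2 * l ≤ N) :
    Module.finrank ℂ ↥(LinearMap.range (congDiff N (Cmat N l)))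
        = l * (2 * N - 1) - 2 * l ^ 2 ∧
      Module.finrank ℂ ↥(LinearMap.ker (congDiff N (Cmat N l)))
        = N ^ 2 - (l * (2 * N - 1) - 2 * l ^ 2) := by
  have hrange : Module.finrank ℂ (LinearMap.range (congDiff N (Cmat N l)))
      = l * (2 * N - 1) - 2 * l ^ 2 := by
    rw [range_congDiff_Cmat h2l, finrank_skewVanishingOn, card_upper_pairs_not_both_ge h2l]
  refine ⟨hrange, ?_⟩
  have hsum := LinearMap.finrank_range_add_finrank_ker (congDiff N (Cmat N l))
  rw [hrange, Module.finrank_matrix, Module.finrank_self, Fintype.card_fin, mul_one, ← sq] at hsum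
  omega
end
end

section
/- Let V = E ⊕ E* of dimension 2N, N even, N ≥ 6. Consider the Clifford apolarity map Φ_{e_{[N]}+1} : ⋀^{od}E* → E ⊕ E*, f ↦ (f · e_{[N]})|_E + f|_{E*}. Its kernel is ⋀³E* ⊕ ⋀⁵E* ⊕ … ⊕ ⋀^{N−3}E*, and the common zero locus on S_N^+ of the corresponding global sections of U(1) (namely {[a] ∈ S_N^+ : ⟨f, v·a⟩ = 0 ∀ v ∈ V, ∀ f ∈ Ker}) equals exactly {[e_{[N]}], [1]}. Hence the general point of σ_2(S_N^+) is identifiable: its rank-2 decomposition into pure spinors is unique. -/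
/-!
Contracting, resp. wedging, with basis vectors turns the conditions `⟨f_I, v ⋅ a⟩ = 0` into the
vanishing of the coefficients of `a` of even degree `2, …, N - 2`. An even spinor satisfying them
is `c₀ + c e_[N]`, and it is pure only if `c₀ = 0` or `c = 0`: otherwise `v ↦ v ⋅ a` is
injective.

For identifiability let `a + b = e_[N] + 1` with `a`, `b` pure, so that their parts of degree
`0 < k < N` cancel. The annihilator of a pure spinor with scalar part `c₀ ≠ 0` is a graph over
`E^∨`, which forces `a = c₀ exp (a₂ / c₀)`. If both scalar parts are nonzero, degree 4 gives
`a₂ ^ 2 = 0`, so neither `a` nor `b` has a part of top degree, contradicting the sum. If `b` has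
no scalar part, its annihilator is a graph over `E`, and every `e ∈ E` wedges `b₂ = -a₂` to zero;
hence `a₂ = 0`, `a = 1` and `b = e_[N]`.
-/

noncomputable section
open CliffordAlgebra

/-- The even part `⋀^{ev} E` of the exterior algebra (one half-spin representation). -/
def evenPart (N : ℕ) : Submodule ℂ (ExtE N) :=
  CliffordAlgebra.evenOdd (0 : QuadraticForm ℂ (Evec N)) 0

/-- The odd part `⋀^{od} E` of the exterior algebra (the other half-spin representation). -/
def oddPart (N : ℕ) : Submodule ℂ (ExtE N) :=
  CliffordAlgebra.evenOdd (0 : QuadraticForm ℂ (Evec N)) 1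

/-- A (representative of a) pure spinor of the even half-spin representation:
a nonzero even spinor whose isotropic annihilator `H_a = ker ψ_a` is maximal,
of dimension `N`. -/
def purespinor {N : ℕ} (a : ExtE N) : Prop :=
  a ≠ 0 ∧ a ∈ evenPart N ∧ Module.finrank ℂ (LinearMap.ker (psi a)) = N

/-- The spinor variety `S_N^+`, as a set of points of the projective space
`ℙ(⋀^{ev}E) ⊆ ℙ(⋀E)`. -/
def SpinorVariety (N : ℕ) : Set (Projectivization ℂ (ExtE N)) :=
  {p | ∃ (a : ExtE N) (h : a ≠ 0), purespinor a ∧ p = Projectivization.mk ℂ a h}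

/-- The functional on `⋀E` extracting (up to sign) the coefficient of `e_I`:
the pairing `x ↦ ⟨f_I, x⟩` with the dual basis vector `f_I ∈ ⋀ E^∨`,
realized by iterated contraction along `I` followed by the projection to scalars. -/
def coefI {N : ℕ} (I : Finset (Fin N)) : ExtE N →ₗ[ℂ] ℂ :=
  (ExteriorAlgebra.algebraMapInv (R := ℂ) (M := Evec N)).toLinearMap ∘ₗ
    ((I.sort (· ≤ ·)).map fun i =>
      (CliffordAlgebra.contractLeft (Q := (0 : QuadraticForm ℂ (Evec N)))
        (LinearMap.proj i) : ExtE N →ₗ[ℂ] ExtE N)).prod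

theorem Submodule.exists_mem_apply_eq_of_finrank_eq {K V W : Type*} [DivisionRing K]
    [AddCommGroup V] [Module K V] [AddCommGroup W] [Module K W] [FiniteDimensional K V]
    [FiniteDimensional K W]
    {S : Submodule K V} (π : V →ₗ[K] W) (hS : Module.finrank K S = Module.finrank K W)
    (hπ : ∀ x ∈ S, π x = 0 → x = 0) (w : W) : ∃ x ∈ S, π x = w := by
  have hinj : Function.Injective (π ∘ₗ S.subtype) := by
    rw [← LinearMap.ker_eq_bot, Submodule.eq_bot_iff]
    rintro ⟨x, hx⟩ h
    exact Subtype.ext (hπ x hx h)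
  obtain ⟨⟨x, hx⟩, rfl⟩ := (LinearMap.injective_iff_surjective_of_finrank_eq_finrank hS).1 hinj w
  exact ⟨x, hx, rfl⟩

namespace CliffordAlgebra

variable {R M : Type*} [CommRing R] [AddCommGroup M] [Module R M] {Q : QuadraticForm R M}

/-- Contraction is an anti-derivation; across an even factor no sign appears. -/
theorem contractLeft_mul_of_mem_evenOdd_zero (d : Module.Dual R M) {x : CliffordAlgebra Q}
    (hx : x ∈ evenOdd Q 0) (z : CliffordAlgebra Q) :
    contractLeft d (x * z) = contractLeft d x * z + x * contractLeft d z := by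
  induction x, hx using even_induction with
  | algebraMap r => rw [contractLeft_algebraMap_mul, contractLeft_algebraMap, zero_mul, zero_add]
  | add x y _ _ hx hy => rw [add_mul, map_add, hx, hy, map_add, add_mul, add_mul]; abel
  | ι_mul_ι_mul m₁ m₂ x _ ih =>
    simp only [mul_assoc, contractLeft_ι_mul, ih, mul_sub, sub_mul, smul_mul_assoc, mul_add]
    abel

end CliffordAlgebra

namespace ExteriorAlgebra

variable {R M : Type*} [CommRing R] [AddCommGroup M] [Module R M]

theorem commute_ι_mul_ι (m₁ m₂ : M) (z : ExteriorAlgebra R M) :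
    Commute (ι R m₁ * ι R m₂) z := by
  induction z using CliffordAlgebra.induction with
  | algebraMap r => exact Algebra.commute_algebraMap_right r _
  | ι m =>
    have h₁ := eq_neg_of_add_eq_zero_left (ι_add_mul_swap (R := R) m₁ m)
    have h₂ := eq_neg_of_add_eq_zero_left (ι_add_mul_swap (R := R) m₂ m)
    change _ * _ = _ * _
    rw [mul_assoc, h₂, mul_neg, ← mul_assoc, h₁, neg_mul, neg_neg, mul_assoc]
  | mul a b ha hb => exact ha.mul_right hb
  | add a b ha hb => exact ha.add_right hb

theorem commute_of_mem_evenOdd_zero {x : ExteriorAlgebra R M}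
    (hx : x ∈ CliffordAlgebra.evenOdd (0 : QuadraticForm R M) 0) (z : ExteriorAlgebra R M) :
    Commute x z := by
  induction x, hx using CliffordAlgebra.even_induction with
  | algebraMap r => exact Algebra.commute_algebraMap_left r z
  | add x y _ _ hx hy => exact hx.add_left hy
  | ι_mul_ι_mul m₁ m₂ x _ ih => exact (commute_ι_mul_ι m₁ m₂ z).mul_left ih

theorem contractLeft_pow_succ_of_mem_evenOdd_zero (d : Module.Dual R M) {ω : ExteriorAlgebra R M}
    (hω : ω ∈ CliffordAlgebra.evenOdd (0 : QuadraticForm R M) 0) (k : ℕ) :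
    CliffordAlgebra.contractLeft d (ω ^ (k + 1)) =
      (k + 1) • (CliffordAlgebra.contractLeft d ω * ω ^ k) := by
  induction k with
  | zero => simp
  | succ k ih =>
    rw [pow_succ' ω (k + 1), CliffordAlgebra.contractLeft_mul_of_mem_evenOdd_zero d hω, ih,
      mul_smul_comm, ← mul_assoc, (commute_of_mem_evenOdd_zero hω _).eq, mul_assoc, ← pow_succ',
      succ_nsmul' (n := k + 1), add_comm]

end ExteriorAlgebra

namespace CliffordApolarity

variable {N : ℕ}

lemma exists_notMem_of_card_lt {J : Finset (Fin N)} (hJ : J.card < N) : ∃ l, l ∉ J := by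
  obtain ⟨l, -, hl⟩ := Finset.exists_mem_notMem_of_card_lt_card
    (by simpa using hJ : J.card < (Finset.univ : Finset (Fin N)).card)
  exact ⟨l, hl⟩

lemma empty_ne_univ (hN : N ≠ 0) : (∅ : Finset (Fin N)) ≠ Finset.univ := fun h => by
  have := congrArg Finset.card h
  simp at this
  omega

def eVec (i : Fin N) : ExtE N := ExteriorAlgebra.ι ℂ (Pi.single i 1)

def contr (i : Fin N) : ExtE N →ₗ[ℂ] ExtE N := contractLeft (LinearMap.proj i)

/-- The sign picked up when `e_i` is moved past the factors `e_j`, `j < i`, of `e_J`. -/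
def monoSign (i : Fin N) (J : Finset (Fin N)) : ℂ := (-1) ^ (J.filter (· < i)).card

section Monomials

variable {i j : Fin N} {J : Finset (Fin N)}

lemma monoSign_mul_self (i : Fin N) (J : Finset (Fin N)) : monoSign i J * monoSign i J = 1 := by
  rw [monoSign, ← pow_add, ← two_mul, pow_mul, neg_one_sq, one_pow]

lemma monoSign_ne_zero (i : Fin N) (J : Finset (Fin N)) : monoSign i J ≠ 0 :=
  left_ne_zero_of_mul_eq_one (monoSign_mul_self i J)

lemma monoSign_of_forall_lt (h : ∀ j ∈ J, i < j) : monoSign i J = 1 := by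
  rw [monoSign, Finset.filter_false_of_mem fun j hj => (h j hj).asymm, Finset.card_empty,
    pow_zero]

lemma monoSign_insert_of_lt (hji : j < i) (hj : j ∉ J) :
    monoSign i (insert j J) = -monoSign i J := by
  rw [monoSign, monoSign, Finset.filter_insert, if_pos hji,
    Finset.card_insert_of_notMem (by simp [hj]), pow_succ, mul_neg_one]

lemma monoSign_erase_self (i : Fin N) (J : Finset (Fin N)) :
    monoSign i (J.erase i) = monoSign i J := by
  rw [monoSign, monoSign, Finset.filter_erase, Finset.erase_eq_of_notMem (by simp)]

lemma monoSign_insert_self (i : Fin N) (J : Finset (Fin N)) :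
    monoSign i (insert i J) = monoSign i J := by
  rw [monoSign, monoSign, Finset.filter_insert, if_neg (lt_irrefl i)]

@[simp] lemma eI_empty : eI (∅ : Finset (Fin N)) = 1 := by
  simp [eI]

lemma eI_insert_of_forall_lt (h : ∀ j ∈ J, i < j) : eI (insert i J) = eVec i * eI J := by
  rw [eI, Finset.sort_insert _ (fun j hj => (h j hj).le) fun hi => lt_irrefl i (h i hi)]
  simp [eI, eVec]

lemma eVec_mul_self (i : Fin N) : eVec i * eVec i = 0 :=
  ExteriorAlgebra.ι_sq_zero _

lemma eVec_anticomm (i j : Fin N) : eVec i * eVec j = -(eVec j * eVec i) :=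
  eq_neg_of_add_eq_zero_left (ExteriorAlgebra.ι_add_mul_swap _ _)

lemma eVec_mul_eI_of_mem (h : i ∈ J) : eVec i * eI J = 0 := by
  induction J using Finset.induction_on_min with
  | empty => simp at h
  | insert j J hj ih =>
    rw [eI_insert_of_forall_lt hj, ← mul_assoc]
    rcases Finset.mem_insert.1 h with rfl | h
    · rw [eVec_mul_self, zero_mul]
    · rw [eVec_anticomm, neg_mul, mul_assoc, ih h, mul_zero, neg_zero]

lemma eVec_mul_eI_of_notMem (h : i ∉ J) : eVec i * eI J = monoSign i J • eI (insert i J) := by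
  induction J using Finset.induction_on_min with
  | empty => simp [monoSign, eI, eVec]
  | insert j J hj ih =>
    have hij : i ≠ j := fun hij => h (hij ▸ Finset.mem_insert_self j J)
    have hiJ : i ∉ J := fun hiJ => h (Finset.mem_insert_of_mem hiJ)
    rcases hij.lt_or_gt with hlt | hgt
    · have hlt' : ∀ k ∈ insert j J, i < k := by
        simpa [hlt] using fun k hk => hlt.trans (hj k hk)
      rw [monoSign_of_forall_lt hlt', one_smul, eI_insert_of_forall_lt hlt']
    · have hj' : ∀ k ∈ insert i J, j < k := by simpa [hgt] using hj
      rw [eI_insert_of_forall_lt hj, ← mul_assoc, eVec_anticomm, neg_mul, mul_assoc, ih hiJ,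
        mul_smul_comm, ← eI_insert_of_forall_lt hj', Finset.insert_comm,
        monoSign_insert_of_lt hgt fun hjJ => lt_irrefl j (hj j hjJ), neg_smul]

lemma contr_eVec_mul (i j : Fin N) (x : ExtE N) :
    contr i (eVec j * x) = (if i = j then x else 0) - eVec j * contr i x := by
  rw [contr, eVec, contractLeft_ι_mul, LinearMap.proj_apply, Pi.single_apply]
  split_ifs <;> simp

lemma contr_eI_of_notMem (h : i ∉ J) : contr i (eI J) = 0 := by
  induction J using Finset.induction_on_min with
  | empty => simp [contr]
  | insert j J _ ih =>
    rw [Finset.mem_insert, not_or] at h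
    rw [eI_insert_of_forall_lt ‹_›, contr_eVec_mul, if_neg h.1, ih h.2, mul_zero, sub_zero]

lemma contr_eI_of_mem (h : i ∈ J) : contr i (eI J) = monoSign i J • eI (J.erase i) := by
  have key := eVec_mul_eI_of_notMem (Finset.notMem_erase i J)
  rw [Finset.insert_erase h, monoSign_erase_self] at key
  have := congrArg (contr i) key
  rw [contr_eVec_mul, if_pos rfl, contr_eI_of_notMem (Finset.notMem_erase i J), mul_zero,
    sub_zero, map_smul] at this
  rw [this, smul_smul, monoSign_mul_self, one_smul]

end Monomials

section Coefficients

variable {J K : Finset (Fin N)} {l : Fin N}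

def contrList (l : List (Fin N)) : ExtE N →ₗ[ℂ] ExtE N := (l.map contr).prod

lemma contrList_eI {l : List (Fin N)} (hl : l.Nodup) (K : Finset (Fin N)) :
    ∃ σ : ℂ, σ ≠ 0 ∧
      contrList l (eI K) = if l.toFinset ⊆ K then σ • eI (K \ l.toFinset) else 0 := by
  induction l with
  | nil => exact ⟨1, one_ne_zero, by simp [contrList]⟩
  | cons i l ih =>
    obtain ⟨hil, hl⟩ := List.nodup_cons.1 hl
    obtain ⟨σ, hσ, h⟩ := ih hl
    refine ⟨σ * monoSign i (K \ l.toFinset), mul_ne_zero hσ (monoSign_ne_zero _ _), ?_⟩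
    have hstep : contrList (i :: l) (eI K) = contr i (contrList l (eI K)) := by
      rw [contrList, List.map_cons, List.prod_cons, Module.End.mul_apply]; rfl
    rw [hstep, h, List.toFinset_cons]
    by_cases hlK : l.toFinset ⊆ K
    · by_cases hiK : i ∈ K
      · have hmem : i ∈ K \ l.toFinset := Finset.mem_sdiff.2 ⟨hiK, by simpa using hil⟩
        rw [if_pos hlK, if_pos (Finset.insert_subset hiK hlK), map_smul, contr_eI_of_mem hmem,
          smul_smul, Finset.sdiff_insert]
      · rw [if_pos hlK, if_neg fun h => hiK (h (Finset.mem_insert_self i _)), map_smul,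
          contr_eI_of_notMem fun h => hiK (Finset.mem_sdiff.1 h).1, smul_zero]
    · rw [if_neg hlK, if_neg fun h => hlK ((Finset.subset_insert i _).trans h), map_zero]

lemma algebraMapInv_eI (K : Finset (Fin N)) :
    ExteriorAlgebra.algebraMapInv (eI K) = if K = ∅ then 1 else 0 := by
  induction K using Finset.induction_on_min with
  | empty => simp
  | insert j K hj _ =>
    rw [eI_insert_of_forall_lt hj, map_mul, eVec, ExteriorAlgebra.algebraMapInv,
      ExteriorAlgebra.lift_ι_apply, if_neg (Finset.insert_ne_empty j K)]
    exact zero_mul _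

lemma coefI_eI_eq_zero_iff : coefI J (eI K) = 0 ↔ J ≠ K := by
  obtain ⟨σ, hσ, h⟩ := contrList_eI (Finset.sort_nodup J (· ≤ ·)) K
  change ExteriorAlgebra.algebraMapInv (contrList _ (eI K)) = 0 ↔ _
  rw [h, Finset.sort_toFinset]
  split_ifs with hJK
  · simp only [map_smul, algebraMapInv_eI, Finset.sdiff_eq_empty_iff_subset]
    by_cases hKJ : K ⊆ J
    · simp [hσ, Finset.Subset.antisymm hJK hKJ]
    · simpa [hKJ] using fun h => hKJ h.ge
  · simpa using fun h => hJK h.le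

lemma coefI_eI_of_ne (h : J ≠ K) : coefI J (eI K) = 0 := coefI_eI_eq_zero_iff.2 h

lemma coefI_eI_self_ne_zero (J : Finset (Fin N)) : coefI J (eI J) ≠ 0 :=
  fun h => coefI_eI_eq_zero_iff.1 h rfl

lemma linearIndependent_eI : LinearIndependent ℂ (eI : Finset (Fin N) → ExtE N) := by
  refine Fintype.linearIndependent_iff.2 fun g hg J => ?_
  have h := congrArg (coefI J) hg
  rw [map_sum, map_zero, Finset.sum_eq_single J (fun K _ hK => by
    rw [map_smul, coefI_eI_of_ne (Ne.symm hK), smul_zero]) (by simp), map_smul,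
    smul_eq_mul] at h
  exact (mul_eq_zero.1 h).resolve_right (coefI_eI_self_ne_zero J)

def eIBasis : Module.Basis (Finset (Fin N)) ℂ (ExtE N) :=
  basisOfLinearIndependentOfCardEqFinrank linearIndependent_eI
    (Module.finrank_eq_card_basis (Pi.basisFun ℂ (Fin N)).ExteriorAlgebra).symm

@[simp] lemma coe_eIBasis : ⇑(eIBasis (N := N)) = eI :=
  coe_basisOfLinearIndependentOfCardEqFinrank _ _

def coef (J : Finset (Fin N)) : ExtE N →ₗ[ℂ] ℂ := eIBasis.coord J

lemma coef_eI (J K : Finset (Fin N)) : coef J (eI K) = if K = J then 1 else 0 := by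
  rw [coef, ← coe_eIBasis, Module.Basis.coord_apply, Module.Basis.repr_self,
    Finsupp.single_apply]

lemma ext_coef {x y : ExtE N} (h : ∀ J, coef J x = coef J y) : x = y :=
  eIBasis.ext_elem h

lemma eI_ne_zero (J : Finset (Fin N)) : eI J ≠ 0 := by
  simpa using eIBasis.ne_zero J

lemma coefI_eq_smul_coef (J : Finset (Fin N)) : coefI J = coefI J (eI J) • coef J :=
  eIBasis.ext fun K => by
    rw [coe_eIBasis, LinearMap.smul_apply, coef_eI, smul_eq_mul]
    split_ifs with h
    · rw [h, mul_one]
    · rw [coefI_eI_of_ne (Ne.symm h), mul_zero]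

lemma coefI_eq_zero_iff {x : ExtE N} : coefI J x = 0 ↔ coef J x = 0 := by
  rw [coefI_eq_smul_coef, LinearMap.smul_apply, smul_eq_zero,
    or_iff_right (coefI_eI_self_ne_zero J)]

lemma coef_empty : coef (∅ : Finset (Fin N)) = ExteriorAlgebra.algebraMapInv.toLinearMap :=
  eIBasis.ext fun K => by simp [coef_eI, algebraMapInv_eI]

lemma coef_eVec_mul (hl : l ∉ K) (x : ExtE N) :
    coef (insert l K) (eVec l * x) = monoSign l K * coef K x := by
  suffices h : coef (insert l K) ∘ₗ LinearMap.mulLeft ℂ (eVec l) = monoSign l K • coef K from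
    LinearMap.congr_fun h x
  refine eIBasis.ext fun M => ?_
  simp only [coe_eIBasis, LinearMap.comp_apply, LinearMap.mulLeft_apply, LinearMap.smul_apply,
    smul_eq_mul]
  by_cases hlM : l ∈ M
  · rw [eVec_mul_eI_of_mem hlM, map_zero, coef_eI, if_neg (by rintro rfl; exact hl hlM), mul_zero]
  · rw [eVec_mul_eI_of_notMem hlM, map_smul, coef_eI, coef_eI, smul_eq_mul]
    by_cases hMK : M = K
    · rw [hMK, if_pos rfl, if_pos rfl]
    · rw [if_neg hMK, if_neg fun h => hMK (by
        rw [← Finset.erase_insert hlM, h, Finset.erase_insert hl]), mul_zero, mul_zero]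

lemma coef_contr (hl : l ∉ K) (x : ExtE N) :
    coef K (contr l x) = monoSign l K * coef (insert l K) x := by
  suffices h : coef K ∘ₗ contr l = monoSign l K • coef (insert l K) from LinearMap.congr_fun h x
  refine eIBasis.ext fun M => ?_
  simp only [coe_eIBasis, LinearMap.comp_apply, LinearMap.smul_apply, smul_eq_mul]
  by_cases hlM : l ∈ M
  · rw [contr_eI_of_mem hlM, map_smul, coef_eI, coef_eI, smul_eq_mul]
    by_cases hMK : M = insert l K
    · rw [hMK, Finset.erase_insert hl, if_pos rfl, if_pos rfl, monoSign_insert_self]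
    · rw [if_neg hMK, if_neg fun h => hMK (by rw [← h, Finset.insert_erase hlM]), mul_zero,
        mul_zero]
  · rw [contr_eI_of_notMem hlM, map_zero, coef_eI,
      if_neg (by rintro rfl; exact hlM (Finset.mem_insert_self l K)), mul_zero]

lemma eq_zero_of_forall_contr {x : ExtE N} (h0 : coef ∅ x = 0) (h : ∀ i, contr i x = 0) :
    x = 0 := by
  refine ext_coef fun J => ?_
  rcases J.eq_empty_or_nonempty with rfl | ⟨l, hl⟩
  · rw [h0, map_zero]
  · have := coef_contr (Finset.notMem_erase l J) x
    rw [h l, map_zero, Finset.insert_erase hl, zero_eq_mul] at this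
    rw [this.resolve_left (monoSign_ne_zero _ _), map_zero]

end Coefficients

section Grades

variable {k m : ℕ} {x : ExtE N} {J : Finset (Fin N)}

def grade (k : ℕ) : Submodule ℂ (ExtE N) := Submodule.span ℂ (eI '' {J | J.card = k})

def gradePart (k : ℕ) : ExtE N →ₗ[ℂ] ExtE N :=
  eIBasis.constr ℂ fun J => if J.card = k then eI J else 0

lemma gradePart_eI (k : ℕ) (J : Finset (Fin N)) :
    gradePart k (eI J) = if J.card = k then eI J else 0 := by
  have h := eIBasis.constr_basis ℂ (fun J => if J.card = k then eI J else 0) J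
  rwa [coe_eIBasis] at h

lemma eI_mem_grade (J : Finset (Fin N)) : eI J ∈ grade J.card :=
  Submodule.subset_span ⟨J, rfl, rfl⟩

lemma gradePart_of_mem_grade (hx : x ∈ grade m) (k : ℕ) :
    gradePart k x = if m = k then x else 0 := by
  induction hx using Submodule.span_induction with
  | mem _ h => obtain ⟨J, rfl, rfl⟩ := h; exact gradePart_eI _ _
  | zero => simp
  | add _ _ _ _ h₁ h₂ => rw [map_add, h₁, h₂]; split_ifs <;> simp
  | smul c _ _ h => rw [map_smul, h]; split_ifs <;> simp

lemma gradePart_mem_grade (k : ℕ) (x : ExtE N) : gradePart k x ∈ grade k := by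
  rw [gradePart, eIBasis.constr_apply_fintype (S := ℂ)]
  refine Submodule.sum_mem _ fun J _ => Submodule.smul_mem _ _ ?_
  split_ifs with h
  · exact h ▸ eI_mem_grade J
  · exact zero_mem _

lemma sum_gradePart (x : ExtE N) : ∑ k ∈ Finset.range (N + 1), gradePart k x = x := by
  suffices h : ∑ k ∈ Finset.range (N + 1), gradePart (N := N) k = LinearMap.id by
    simpa using LinearMap.congr_fun h x
  refine eIBasis.ext fun J => ?_
  have hJ : J.card < N + 1 := Nat.lt_succ_of_le (by simpa using J.card_le_univ)
  simp [gradePart_eI, Finset.sum_ite_eq, hJ]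

lemma coef_gradePart (J : Finset (Fin N)) (k : ℕ) (x : ExtE N) :
    coef J (gradePart k x) = if J.card = k then coef J x else 0 := by
  suffices h : coef J ∘ₗ gradePart k = if J.card = k then coef J else 0 by
    have hx := LinearMap.congr_fun h x
    split_ifs at hx ⊢ <;> simpa using hx
  refine eIBasis.ext fun K => ?_
  simp only [coe_eIBasis, LinearMap.comp_apply, gradePart_eI]
  by_cases hKJ : K = J
  · subst hKJ; split_ifs <;> simp
  · have hK : coef J (eI K) = 0 := by rw [coef_eI, if_neg hKJ]
    split_ifs <;> simp [hK]

lemma coef_eq_zero_of_mem_grade (hx : x ∈ grade m) (hJ : J.card ≠ m) : coef J x = 0 := by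
  rw [← if_pos rfl (c := m = m) (t := x) (e := 0), ← gradePart_of_mem_grade hx, coef_gradePart,
    if_neg hJ]

lemma gradePart_eq_zero_of_coef (h : ∀ J : Finset (Fin N), J.card = k → coef J x = 0) :
    gradePart k x = 0 :=
  ext_coef fun J => by
    rw [coef_gradePart, map_zero]
    split_ifs with hJ
    exacts [h J hJ, rfl]

lemma gradePart_zero (x : ExtE N) : gradePart 0 x = coef ∅ x • 1 := by
  suffices h : gradePart (N := N) 0 = (coef ∅).smulRight 1 from LinearMap.congr_fun h x
  refine eIBasis.ext fun J => ?_
  simp only [coe_eIBasis, gradePart_eI, LinearMap.smulRight_apply, coef_eI, Finset.card_eq_zero]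
  split_ifs with h <;> simp [h]

lemma gradePart_top (x : ExtE N) : gradePart N x = coef Finset.univ x • eI Finset.univ := by
  suffices h : gradePart (N := N) N = (coef Finset.univ).smulRight (eI Finset.univ) from
    LinearMap.congr_fun h x
  refine eIBasis.ext fun J => ?_
  have hJ : J.card = N ↔ J = Finset.univ := by
    simpa using Finset.card_eq_iff_eq_univ J
  simp only [coe_eIBasis, gradePart_eI, LinearMap.smulRight_apply, coef_eI, hJ]
  split_ifs with h <;> simp [h]

lemma eVec_mul_mem_grade (i : Fin N) (hx : x ∈ grade k) : eVec i * x ∈ grade (k + 1) := by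
  induction hx using Submodule.span_induction with
  | mem _ h =>
    obtain ⟨J, rfl, rfl⟩ := h
    by_cases hi : i ∈ J
    · rw [eVec_mul_eI_of_mem hi]; exact zero_mem _
    · rw [eVec_mul_eI_of_notMem hi, ← Finset.card_insert_of_notMem hi]
      exact Submodule.smul_mem _ _ (eI_mem_grade _)
  | zero => rw [mul_zero]; exact zero_mem _
  | add _ _ _ _ h₁ h₂ => rw [mul_add]; exact add_mem h₁ h₂
  | smul c _ _ h => rw [mul_smul_comm]; exact Submodule.smul_mem _ _ h

lemma ι_eq_sum_smul_eVec (e : Evec N) : ExteriorAlgebra.ι ℂ e = ∑ i, e i • eVec i := by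
  conv_lhs => rw [← Finset.univ_sum_single e, map_sum]
  refine Finset.sum_congr rfl fun i _ => ?_
  rw [eVec, ← map_smul, ← Pi.single_smul, smul_eq_mul, mul_one]

lemma ι_mul_mem_grade (e : Evec N) (hx : x ∈ grade k) :
    ExteriorAlgebra.ι ℂ e * x ∈ grade (k + 1) := by
  rw [ι_eq_sum_smul_eVec, Finset.sum_mul]
  refine Submodule.sum_mem _ fun i _ => ?_
  rw [smul_mul_assoc]
  exact Submodule.smul_mem _ _ (eVec_mul_mem_grade i hx)

lemma ι_mem_grade_one (e : Evec N) : ExteriorAlgebra.ι ℂ e ∈ grade 1 := by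
  simpa using ι_mul_mem_grade e (eI_mem_grade (N := N) ∅)

lemma contractLeft_eI_mem_grade (d : Module.Dual ℂ (Evec N)) (J : Finset (Fin N)) :
    ∀ k, J.card = k + 1 → contractLeft d (eI J) ∈ grade k := by
  induction J using Finset.induction_on_min with
  | empty => simp
  | insert j J hj ih =>
    intro k hk
    rw [Finset.card_insert_of_notMem fun h => lt_irrefl j (hj j h), Nat.succ_inj] at hk
    rw [eI_insert_of_forall_lt hj, eVec, contractLeft_ι_mul]
    refine sub_mem (Submodule.smul_mem _ _ (hk ▸ eI_mem_grade J)) ?_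
    rcases k with _ | k
    · rw [Finset.card_eq_zero.1 hk, eI_empty, contractLeft_one, mul_zero]
      exact zero_mem _
    · exact eVec_mul_mem_grade j (ih k hk)

lemma contractLeft_mem_grade (d : Module.Dual ℂ (Evec N)) (hx : x ∈ grade (k + 1)) :
    contractLeft d x ∈ grade k := by
  induction hx using Submodule.span_induction with
  | mem _ h => obtain ⟨J, hJ, rfl⟩ := h; exact contractLeft_eI_mem_grade d J k hJ
  | zero => rw [map_zero]; exact zero_mem _
  | add _ _ _ _ h₁ h₂ => rw [map_add]; exact add_mem h₁ h₂
  | smul c _ _ h => rw [map_smul]; exact Submodule.smul_mem _ _ h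

lemma contractLeft_eq_zero_of_mem_grade_zero (d : Module.Dual ℂ (Evec N)) (hx : x ∈ grade 0) :
    contractLeft d x = 0 := by
  induction hx using Submodule.span_induction with
  | mem _ h =>
    obtain ⟨J, hJ, rfl⟩ := h
    rw [Finset.card_eq_zero.1 hJ, eI_empty, contractLeft_one]
  | zero => rw [map_zero]
  | add _ _ _ _ h₁ h₂ => rw [map_add, h₁, h₂, add_zero]
  | smul c _ _ h => rw [map_smul, h, smul_zero]

lemma gradePart_succ_of_raises {f : ExtE N →ₗ[ℂ] ExtE N}
    (hf : ∀ k x, x ∈ grade k → f x ∈ grade (k + 1)) (k : ℕ) (x : ExtE N) :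
    gradePart (k + 1) (f x) = f (gradePart k x) := by
  suffices h : gradePart (k + 1) ∘ₗ f = f ∘ₗ gradePart k from LinearMap.congr_fun h x
  refine eIBasis.ext fun J => ?_
  simp only [coe_eIBasis, LinearMap.comp_apply, gradePart_eI,
    gradePart_of_mem_grade (hf _ _ (eI_mem_grade J)), Nat.succ_inj]
  split_ifs <;> simp

lemma gradePart_zero_of_raises {f : ExtE N →ₗ[ℂ] ExtE N}
    (hf : ∀ k x, x ∈ grade k → f x ∈ grade (k + 1)) (x : ExtE N) : gradePart 0 (f x) = 0 := by
  suffices h : gradePart 0 ∘ₗ f = 0 from LinearMap.congr_fun h x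
  refine eIBasis.ext fun J => ?_
  simp [gradePart_of_mem_grade (hf _ _ (eI_mem_grade J))]

lemma gradePart_of_lowers {f : ExtE N →ₗ[ℂ] ExtE N}
    (hf : ∀ k x, x ∈ grade (k + 1) → f x ∈ grade k) (hf₀ : ∀ x ∈ grade 0, f x = 0) (k : ℕ)
    (x : ExtE N) : gradePart k (f x) = f (gradePart (k + 1) x) := by
  suffices h : gradePart k ∘ₗ f = f ∘ₗ gradePart (k + 1) from LinearMap.congr_fun h x
  refine eIBasis.ext fun J => ?_
  simp only [coe_eIBasis, LinearMap.comp_apply, gradePart_eI]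
  rcases hJ : J.card with _ | j
  · rw [hf₀ _ (hJ ▸ eI_mem_grade J), if_neg (Nat.zero_ne_add_one k), map_zero, map_zero]
  · rw [gradePart_of_mem_grade (hf _ _ (hJ ▸ eI_mem_grade J))]
    by_cases hjk : j = k <;> simp [hjk]

lemma gradePart_succ_ι_mul (e : Evec N) (k : ℕ) (x : ExtE N) :
    gradePart (k + 1) (ExteriorAlgebra.ι ℂ e * x) = ExteriorAlgebra.ι ℂ e * gradePart k x :=
  gradePart_succ_of_raises (f := LinearMap.mulLeft ℂ _) (fun _ _ => ι_mul_mem_grade e) k x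

lemma gradePart_zero_ι_mul (e : Evec N) (x : ExtE N) :
    gradePart 0 (ExteriorAlgebra.ι ℂ e * x) = 0 :=
  gradePart_zero_of_raises (f := LinearMap.mulLeft ℂ _) (fun _ _ => ι_mul_mem_grade e) x

lemma gradePart_contractLeft (d : Module.Dual ℂ (Evec N)) (k : ℕ) (x : ExtE N) :
    gradePart k (contractLeft d x) = contractLeft d (gradePart (k + 1) x) :=
  gradePart_of_lowers (fun _ _ => contractLeft_mem_grade d)
    (fun _ => contractLeft_eq_zero_of_mem_grade_zero d) k x

lemma eI_mem_evenOdd (J : Finset (Fin N)) :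
    eI J ∈ evenOdd (0 : QuadraticForm ℂ (Evec N)) (J.card : ZMod 2) := by
  induction J using Finset.induction_on_min with
  | empty => simpa using SetLike.one_mem_graded (evenOdd (0 : QuadraticForm ℂ (Evec N)))
  | insert j J hj ih =>
    rw [eI_insert_of_forall_lt hj, Finset.card_insert_of_notMem fun h => lt_irrefl j (hj j h),
      Nat.cast_succ, add_comm]
    exact SetLike.mul_mem_graded (ι_mem_evenOdd_one _ _) ih

lemma grade_le_evenOdd (k : ℕ) : grade k ≤ evenOdd (0 : QuadraticForm ℂ (Evec N)) (k : ZMod 2) :=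
  Submodule.span_le.2 <| by rintro _ ⟨J, rfl, rfl⟩; exact eI_mem_evenOdd J

lemma gradePart_eq_zero_of_mem_evenPart (hx : x ∈ evenPart N) (hk : Odd k) :
    gradePart k x = 0 := by
  induction x, hx using even_induction generalizing k with
  | algebraMap r =>
    rw [Algebra.algebraMap_eq_smul_one, map_smul, ← eI_empty, gradePart_eI,
      if_neg (by rintro rfl; simp at hk), smul_zero]
  | add x y _ _ hx hy => rw [map_add, hx hk, hy hk, add_zero]
  | ι_mul_ι_mul m₁ m₂ x _ ih =>
    obtain ⟨j, rfl⟩ := hk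
    change gradePart _ (ExteriorAlgebra.ι ℂ m₁ * ExteriorAlgebra.ι ℂ m₂ * x) = 0
    rw [mul_assoc]
    rcases j with _ | j
    · rw [show 2 * 0 + 1 = 0 + 1 from rfl, gradePart_succ_ι_mul, gradePart_zero_ι_mul, mul_zero]
    · rw [show 2 * (j + 1) + 1 = 2 * j + 1 + 1 + 1 by ring, gradePart_succ_ι_mul,
        gradePart_succ_ι_mul, ih ⟨j, rfl⟩, mul_zero, mul_zero]

end Grades

section CliffordMultiplication

lemma psi_apply (x : ExtE N) (v : Vsp N) :
    psi x v = ExteriorAlgebra.ι ℂ v.1 * x + contractLeft (toDualMap N v.2) x := rfl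

lemma toDualMap_apply_single (f : Evec N) (i : Fin N) : toDualMap N f (Pi.single i 1) = f i := by
  simp [toDualMap, Pi.single_apply]

lemma toDualMap_single (l : Fin N) : toDualMap N (Pi.single l 1) = LinearMap.proj l := by
  ext e
  simp [toDualMap, Pi.single_apply]

lemma psi_single_fst (x : ExtE N) (l : Fin N) : psi x (Pi.single l 1, 0) = eVec l * x := by
  simp [psi_apply, eVec]

lemma psi_single_snd (x : ExtE N) (l : Fin N) : psi x (0, Pi.single l 1) = contr l x := by
  simp [psi_apply, toDualMap_single, contr]

lemma gradePart_succ_psi (x : ExtE N) (e f : Evec N) (k : ℕ) :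
    gradePart (k + 1) (psi x (e, f)) =
      ExteriorAlgebra.ι ℂ e * gradePart k x +
        contractLeft (toDualMap N f) (gradePart (k + 2) x) := by
  rw [psi_apply, map_add, gradePart_succ_ι_mul, gradePart_contractLeft]

lemma ι_mul_eI_univ (e : Evec N) : ExteriorAlgebra.ι ℂ e * eI Finset.univ = 0 := by
  rw [ι_eq_sum_smul_eVec, Finset.sum_mul]
  exact Finset.sum_eq_zero fun i _ => by
    rw [smul_mul_assoc, eVec_mul_eI_of_mem (Finset.mem_univ i), smul_zero]

/-- Wedging `e_l` into `f ⌋ e_[N]` gives back `f_l • e_[N]`. -/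
lemma contractLeft_eI_univ_eq_zero_iff (f : Evec N) :
    contractLeft (toDualMap N f) (eI Finset.univ) = 0 ↔ f = 0 := by
  refine ⟨fun h => funext fun l => ?_, fun h => by rw [h, map_zero, map_zero, LinearMap.zero_apply]⟩
  have key := congrArg (contractLeft (toDualMap N f)) (ι_mul_eI_univ (Pi.single l (1 : ℂ)))
  rw [contractLeft_ι_mul, h, mul_zero, sub_zero, map_zero, toDualMap_apply_single] at key
  exact (smul_eq_zero.1 key).resolve_right (eI_ne_zero _)

lemma purespinor_algebraMap {c : ℂ} (hc : c ≠ 0) : purespinor (algebraMap ℂ (ExtE N) c) := by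
  refine ⟨by rwa [Ne, ExteriorAlgebra.algebraMap_eq_zero_iff], SetLike.algebraMap_mem_graded _ c,
    ?_⟩
  have hker : LinearMap.ker (psi (algebraMap ℂ (ExtE N) c)) =
      LinearMap.ker (LinearMap.fst ℂ (Evec N) (Evec N)) := by
    ext v
    simp [psi_apply, Algebra.algebraMap_eq_smul_one, hc]
  rw [hker, LinearMap.ker_fst, LinearMap.finrank_range_of_inj LinearMap.inr_injective,
    Module.finrank_fin_fun]

lemma purespinor_smul_eI_univ (hN : Even N) {c : ℂ} (hc : c ≠ 0) :
    purespinor (c • eI (Finset.univ : Finset (Fin N))) := by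
  have heven : eI (Finset.univ : Finset (Fin N)) ∈ evenPart N := by
    have h := eI_mem_evenOdd (N := N) Finset.univ
    rwa [Finset.card_univ, Fintype.card_fin, (ZMod.natCast_eq_zero_iff N 2).2 hN.two_dvd] at h
  refine ⟨smul_ne_zero hc (eI_ne_zero _), Submodule.smul_mem _ _ heven, ?_⟩
  have hker : LinearMap.ker (psi (c • eI (Finset.univ : Finset (Fin N)))) =
      LinearMap.ker (LinearMap.snd ℂ (Evec N) (Evec N)) := by
    ext v
    simp [psi_apply, ι_mul_eI_univ, hc, contractLeft_eI_univ_eq_zero_iff]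
  rw [hker, LinearMap.ker_snd, LinearMap.finrank_range_of_inj LinearMap.inl_injective,
    Module.finrank_fin_fun]

end CliffordMultiplication

section ZeroLocus

/-- `[a]` lies in the common zero locus of the sections of `U(1)` attached to the `f_I` with
`|I|` odd and `3 ≤ |I| ≤ N - 3`; these `f_I` span the kernel of `Φ_{e_[N] + 1}`. -/
def InApolarZeroLocus (a : ExtE N) : Prop :=
  ∀ I : Finset (Fin N), Odd I.card → 3 ≤ I.card → I.card ≤ N - 3 →
    ∀ v : Vsp N, coefI I (psi a v) = 0

variable {a : ExtE N} {J : Finset (Fin N)}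

lemma coefI_eq_zero_of_mem_grade {k : ℕ} {y : ExtE N} (hy : y ∈ grade k) {I : Finset (Fin N)}
    (hI : I.card ≠ k) : coefI I y = 0 :=
  coefI_eq_zero_iff.2 (coef_eq_zero_of_mem_grade hy hI)

lemma inApolarZeroLocus_algebraMap (c : ℂ) : InApolarZeroLocus (algebraMap ℂ (ExtE N) c) := by
  intro I _ h3 _ v
  have hmem : psi (algebraMap ℂ (ExtE N) c) v ∈ grade 1 := by
    rw [psi_apply, contractLeft_algebraMap, add_zero, Algebra.algebraMap_eq_smul_one,
      mul_smul_comm, mul_one]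
    exact Submodule.smul_mem _ c (ι_mem_grade_one v.1)
  exact coefI_eq_zero_of_mem_grade hmem (by omega)

lemma inApolarZeroLocus_smul_eI_univ (c : ℂ) :
    InApolarZeroLocus (c • eI (Finset.univ : Finset (Fin N))) := by
  intro I _ h3 hI v
  have hmem : psi (c • eI Finset.univ) v ∈ grade (N - 1) := by
    rw [psi_apply, mul_smul_comm, ι_mul_eI_univ, smul_zero, zero_add, map_smul]
    refine Submodule.smul_mem _ c (contractLeft_mem_grade _ ?_)
    have hcard : (Finset.univ : Finset (Fin N)).card = N - 1 + 1 := by simp; omega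
    exact hcard ▸ eI_mem_grade Finset.univ
  exact coefI_eq_zero_of_mem_grade hmem (by omega)

lemma coef_eq_zero_of_inApolarZeroLocus_of_four_le (ha : InApolarZeroLocus a)
    (hJ : Even J.card) (h4 : 4 ≤ J.card) (hJN : J.card ≤ N - 2) : coef J a = 0 := by
  obtain ⟨l, hl⟩ := Finset.card_pos.1 (by omega : 0 < J.card)
  have hcard : (J.erase l).card + 1 = J.card := Finset.card_erase_add_one hl
  have hodd : Odd (J.erase l).card := Nat.odd_iff.2 (by have := Nat.even_iff.1 hJ; omega)
  have h := ha (J.erase l) hodd (by omega) (by omega) (0, Pi.single l 1)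
  rw [psi_single_snd, coefI_eq_zero_iff, coef_contr (Finset.notMem_erase l J),
    Finset.insert_erase hl] at h
  exact (mul_eq_zero.1 h).resolve_left (monoSign_ne_zero _ _)

lemma coef_eq_zero_of_inApolarZeroLocus_of_card_eq_two (h6 : 6 ≤ N) (ha : InApolarZeroLocus a)
    (hJ : J.card = 2) : coef J a = 0 := by
  obtain ⟨l, hlJ⟩ := exists_notMem_of_card_lt (by omega : J.card < N)
  have hcard : (insert l J).card = 3 := by rw [Finset.card_insert_of_notMem hlJ, hJ]
  have h := ha (insert l J) (by rw [hcard]; decide) hcard.ge (by omega) (Pi.single l 1, 0)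
  rw [psi_single_fst, coefI_eq_zero_iff, coef_eVec_mul hlJ] at h
  exact (mul_eq_zero.1 h).resolve_left (monoSign_ne_zero _ _)

lemma gradePart_eq_zero_of_inApolarZeroLocus (hN : Even N) (h6 : 6 ≤ N)
    (heven : a ∈ evenPart N) (ha : InApolarZeroLocus a) {k : ℕ} (hk₀ : k ≠ 0) (hkN : k < N) :
    gradePart k a = 0 := by
  rcases Nat.even_or_odd k with hk | hk
  · refine gradePart_eq_zero_of_coef fun J hJ => ?_
    obtain ⟨j, rfl⟩ := hk
    obtain ⟨n, rfl⟩ := hN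
    obtain h2 | h4 : j + j = 2 ∨ 4 ≤ j + j := by omega
    · exact coef_eq_zero_of_inApolarZeroLocus_of_card_eq_two h6 ha (hJ.trans h2)
    · exact coef_eq_zero_of_inApolarZeroLocus_of_four_le ha (hJ ▸ ⟨j, rfl⟩) (hJ ▸ h4)
        (by omega)
  · exact gradePart_eq_zero_of_mem_evenPart heven hk

lemma eq_add_of_gradePart_eq_zero (hN : 0 < N) {x : ExtE N}
    (h : ∀ k, k ≠ 0 → k < N → gradePart k x = 0) :
    x = coef ∅ x • 1 + coef Finset.univ x • eI Finset.univ := by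
  conv_lhs => rw [← sum_gradePart x]
  rw [Finset.sum_range_succ, Finset.sum_eq_single 0
    (fun k hk hk₀ => h k hk₀ (Finset.mem_range.1 hk)) (by simp [hN]), gradePart_zero,
    gradePart_top]

lemma ker_psi_add_smul_eI_univ_eq_bot (hN : 3 ≤ N) {c₀ c : ℂ} (h₀ : c₀ ≠ 0) (hc : c ≠ 0) :
    LinearMap.ker (psi (c₀ • 1 + c • eI (Finset.univ : Finset (Fin N)))) = ⊥ := by
  have hpart : ∀ k, gradePart k (c₀ • 1 + c • eI (Finset.univ : Finset (Fin N))) =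
      (if 0 = k then c₀ • 1 else 0) + if N = k then c • eI Finset.univ else 0 := by
    intro k
    rw [map_add, map_smul, map_smul, ← eI_empty, gradePart_eI, gradePart_eI, Finset.card_univ,
      Fintype.card_fin, Finset.card_empty]
    split_ifs <;> simp
  refine (Submodule.eq_bot_iff _).2 fun ⟨e, f⟩ hv => ?_
  rw [LinearMap.mem_ker] at hv
  have h₁ := gradePart_succ_psi (c₀ • 1 + c • eI Finset.univ) e f 0
  have h₂ := gradePart_succ_psi (c₀ • 1 + c • eI Finset.univ) e f (N - 2)
  simp only [hv, hpart, map_zero, show N - 2 + 2 = N by omega, show N ≠ 2 by omega,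
    show 0 ≠ N - 2 by omega, show N ≠ N - 2 by omega, show 0 ≠ N by omega,
    show N ≠ 0 by omega] at h₁ h₂
  have he : e = 0 := by simpa [h₀, eq_comm (a := (0 : ExtE N))] using h₁
  have hf : f = 0 := by
    simpa [hc, contractLeft_eI_univ_eq_zero_iff, eq_comm (a := (0 : ExtE N))] using h₂
  rw [he, hf, Prod.mk_zero_zero]

theorem purespinor_and_inApolarZeroLocus_iff (hN : Even N) (h6 : 6 ≤ N) (a : ExtE N) :
    purespinor a ∧ InApolarZeroLocus a ↔
      ∃ c : ℂ, c ≠ 0 ∧ (a = c • eI Finset.univ ∨ a = algebraMap ℂ (ExtE N) c) := by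
  constructor
  · rintro ⟨ha, hzero⟩
    have hexp := eq_add_of_gradePart_eq_zero (by omega) fun k hk₀ hkN =>
      gradePart_eq_zero_of_inApolarZeroLocus hN h6 ha.2.1 hzero hk₀ hkN
    by_cases h₀ : coef ∅ a = 0
    · rw [h₀, zero_smul, zero_add] at hexp
      exact ⟨coef Finset.univ a, fun hc => ha.1 (by rw [hexp, hc, zero_smul]), Or.inl hexp⟩
    by_cases hc : coef Finset.univ a = 0
    · rw [hc, zero_smul, add_zero, ← Algebra.algebraMap_eq_smul_one] at hexp
      exact ⟨coef ∅ a, h₀, Or.inr hexp⟩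
    have hdim := ha.2.2
    rw [hexp, ker_psi_add_smul_eI_univ_eq_bot (by omega) h₀ hc, finrank_bot] at hdim
    omega
  · rintro ⟨c, hc, rfl | rfl⟩
    exacts [⟨purespinor_smul_eI_univ hN hc, inApolarZeroLocus_smul_eI_univ c⟩,
      ⟨purespinor_algebraMap hc, inApolarZeroLocus_algebraMap c⟩]

end ZeroLocus

section ScalarPart

variable {a : ExtE N}

lemma contractLeft_gradePart_of_mem_ker {e f : Evec N} (hv : (e, f) ∈ LinearMap.ker (psi a))
    (k : ℕ) : contractLeft (toDualMap N f) (gradePart (k + 2) a) =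
      -(ExteriorAlgebra.ι ℂ e * gradePart k a) := by
  have h := gradePart_succ_psi a e f k
  rw [LinearMap.mem_ker.1 hv, map_zero] at h
  exact eq_neg_of_add_eq_zero_right h.symm

lemma contractLeft_gradePart_two_of_mem_ker {e f : Evec N}
    (hv : (e, f) ∈ LinearMap.ker (psi a)) :
    contractLeft (toDualMap N f) (gradePart 2 a) = -(coef ∅ a • ExteriorAlgebra.ι ℂ e) := by
  rw [contractLeft_gradePart_of_mem_ker hv 0, gradePart_zero, mul_smul_comm, mul_one]

lemma finrank_ker_psi (ha : purespinor a) :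
    Module.finrank ℂ (LinearMap.ker (psi a)) = Module.finrank ℂ (Evec N) := by
  rw [ha.2.2, Module.finrank_fin_fun]

lemma exists_mem_ker_psi_of_coef_empty_ne_zero (ha : purespinor a) (h₀ : coef ∅ a ≠ 0)
    (f : Evec N) : ∃ e : Evec N, (e, f) ∈ LinearMap.ker (psi a) := by
  have hinj : ∀ v ∈ LinearMap.ker (psi a), LinearMap.snd ℂ _ _ v = 0 → v = 0 := by
    rintro ⟨e, f⟩ hv (rfl : f = 0)
    have h := contractLeft_gradePart_two_of_mem_ker hv
    rw [map_zero, map_zero, LinearMap.zero_apply, eq_comm, neg_eq_zero, smul_eq_zero,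
      or_iff_right h₀, ExteriorAlgebra.ι_eq_zero_iff] at h
    rw [h, Prod.mk_zero_zero]
  obtain ⟨⟨e, f'⟩, hv, rfl⟩ :=
    Submodule.exists_mem_apply_eq_of_finrank_eq _ (finrank_ker_psi ha) hinj f
  exact ⟨e, hv⟩

lemma gradePart_two_mem_evenOdd (x : ExtE N) :
    gradePart 2 x ∈ evenOdd (0 : QuadraticForm ℂ (Evec N)) 0 :=
  grade_le_evenOdd 2 (gradePart_mem_grade 2 x)

/-- Degree by degree, `a = c₀ exp (a₂ / c₀)` with `c₀ = coef ∅ a`: every contraction `f ⌋` of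
the difference vanishes, because `f` is the second component of some `(e, f) ∈ ker ψ_a`. -/
theorem factorial_smul_gradePart_two_mul (ha : purespinor a) (h₀ : coef ∅ a ≠ 0) (k : ℕ) :
    (k.factorial : ℂ) • coef ∅ a ^ k • gradePart (2 * k) a = coef ∅ a • gradePart 2 a ^ k := by
  set c₀ := coef ∅ a
  set ω := gradePart 2 a
  induction k with
  | zero => simp [c₀, gradePart_zero]
  | succ k ih =>
    rw [← sub_eq_zero]
    refine eq_zero_of_forall_contr ?_ fun i => ?_
    · have hω : coef ∅ (ω ^ (k + 1)) = 0 := by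
        rw [coef_empty, AlgHom.toLinearMap_apply, map_pow, ← AlgHom.toLinearMap_apply,
          ← coef_empty, coef_gradePart, if_neg (by simp), zero_pow k.succ_ne_zero]
      simp [coef_gradePart, hω]
    obtain ⟨e, hv⟩ := exists_mem_ker_psi_of_coef_empty_ne_zero ha h₀ (Pi.single i 1)
    set A := ExteriorAlgebra.ι ℂ e * gradePart (2 * k) a
    set B := ExteriorAlgebra.ι ℂ e * ω ^ k
    have ih' : (k.factorial : ℂ) • c₀ ^ k • A = c₀ • B := by
      simpa only [mul_smul_comm] using congrArg (ExteriorAlgebra.ι ℂ e * ·) ih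
    rw [contr, ← toDualMap_single, map_sub, map_smul, map_smul, map_smul,
      show 2 * (k + 1) = 2 * k + 2 by ring, contractLeft_gradePart_of_mem_ker hv,
      ExteriorAlgebra.contractLeft_pow_succ_of_mem_evenOdd_zero _ (gradePart_two_mem_evenOdd a),
      contractLeft_gradePart_two_of_mem_ker hv]
    calc _ = -(((k + 1 : ℂ) * c₀) • ((k.factorial : ℂ) • c₀ ^ k • A - c₀ • B)) := by
          rw [Nat.factorial_succ, ← Nat.cast_smul_eq_nsmul ℂ, neg_mul, smul_mul_assoc]
          push_cast
          module
      _ = 0 := by rw [ih', sub_self, smul_zero, neg_zero]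

lemma gradePart_two_pow_succ (ha : purespinor a) (h₀ : coef ∅ a ≠ 0) (k : ℕ) :
    gradePart 2 a ^ (k + 1) =
      (((k + 1).factorial : ℂ) * coef ∅ a ^ k) • gradePart (2 * (k + 1)) a := by
  refine smul_right_injective _ h₀ ?_
  simp only [← factorial_smul_gradePart_two_mul ha h₀, smul_smul]
  congr 1
  ring

lemma gradePart_top_eq_zero_of_sq_eq_zero (hN : Even N) (h4 : 4 ≤ N) (ha : purespinor a)
    (h₀ : coef ∅ a ≠ 0) (hsq : gradePart 2 a ^ 2 = 0) : gradePart N a = 0 := by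
  obtain ⟨m, rfl⟩ := hN
  have h := gradePart_two_pow_succ ha h₀ (m - 1)
  rw [pow_eq_zero_of_le (by omega) hsq, show 2 * (m - 1 + 1) = m + m by omega, eq_comm,
    smul_eq_zero] at h
  exact h.resolve_left (mul_ne_zero (Nat.cast_ne_zero.2 (Nat.factorial_ne_zero _))
    (pow_ne_zero _ h₀))

lemma eq_algebraMap_of_gradePart_two_eq_zero (ha : purespinor a) (h₀ : coef ∅ a ≠ 0)
    (h₂ : gradePart 2 a = 0) : a = algebraMap ℂ (ExtE N) (coef ∅ a) := by
  have hk : ∀ k, k ≠ 0 → gradePart k a = 0 := by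
    intro k hk
    obtain ⟨j, rfl | rfl⟩ := Nat.even_or_odd' k
    · obtain ⟨j, rfl⟩ := Nat.exists_eq_add_one_of_ne_zero (by omega : j ≠ 0)
      have h := gradePart_two_pow_succ ha h₀ j
      rw [h₂, zero_pow (Nat.succ_ne_zero j), eq_comm, smul_eq_zero] at h
      exact h.resolve_left (mul_ne_zero (Nat.cast_ne_zero.2 (Nat.factorial_ne_zero _))
        (pow_ne_zero _ h₀))
    · exact gradePart_eq_zero_of_mem_evenPart ha.2.1 ⟨j, rfl⟩
  conv_lhs => rw [← sum_gradePart a]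
  rw [Finset.sum_eq_single 0 (fun k _ hk₀ => hk k hk₀) (by simp), gradePart_zero,
    Algebra.algebraMap_eq_smul_one]

variable {e f : Evec N}

lemma contractLeft_gradePart_two_eq_zero_of_mem_ker (h₀ : coef ∅ a = 0)
    (hv : (e, f) ∈ LinearMap.ker (psi a)) : contractLeft (toDualMap N f) (gradePart 2 a) = 0 := by
  rw [contractLeft_gradePart_two_of_mem_ker hv, h₀, zero_smul, neg_zero]

lemma ι_mul_gradePart_two_eq_zero_of_mem_ker (h₀ : coef ∅ a = 0)
    (h₄ : ∃ c : ℂ, gradePart 4 a = c • gradePart 2 a ^ 2) (hv : (e, f) ∈ LinearMap.ker (psi a)) :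
    ExteriorAlgebra.ι ℂ e * gradePart 2 a = 0 := by
  obtain ⟨c, hc⟩ := h₄
  have h := contractLeft_gradePart_of_mem_ker hv 2
  rw [hc, map_smul,
    ExteriorAlgebra.contractLeft_pow_succ_of_mem_evenOdd_zero _ (gradePart_two_mem_evenOdd a),
    contractLeft_gradePart_two_eq_zero_of_mem_ker h₀ hv, zero_mul, smul_zero, smul_zero,
    eq_comm, neg_eq_zero] at h
  exact h

lemma eq_zero_of_forall_ι_mul_eq_zero (hN : 3 ≤ N) {ω : ExtE N} (hω : ω ∈ grade 2)
    (h : ∀ e : Evec N, ExteriorAlgebra.ι ℂ e * ω = 0) : ω = 0 := by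
  refine ext_coef fun J => ?_
  rw [map_zero]
  by_cases hJ : J.card = 2
  · obtain ⟨l, hlJ⟩ := exists_notMem_of_card_lt (by omega : J.card < N)
    have h' := congrArg (coef (insert l J)) (h (Pi.single l 1))
    rw [show ExteriorAlgebra.ι ℂ (Pi.single l 1) = eVec l from rfl, coef_eVec_mul hlJ,
      map_zero] at h'
    exact (mul_eq_zero.1 h').resolve_left (monoSign_ne_zero _ _)
  · exact coef_eq_zero_of_mem_grade hω hJ

end ScalarPart

section Identifiability

variable {a b : ExtE N}

lemma gradePart_eq_neg_of_add_eq (hsum : a + b = eI Finset.univ + 1) {k : ℕ} (hk₀ : k ≠ 0)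
    (hkN : k ≠ N) : gradePart k b = -gradePart k a := by
  have h := congrArg (gradePart k) hsum
  rw [map_add, map_add, ← eI_empty, gradePart_eI, gradePart_eI, if_neg (by simp; omega),
    if_neg (by simp; omega), add_zero] at h
  exact eq_neg_of_add_eq_zero_right h

lemma coef_empty_add_coef_empty (hN : N ≠ 0) (hsum : a + b = eI Finset.univ + 1) :
    coef ∅ a + coef ∅ b = 1 := by
  have h := congrArg (coef ∅) hsum
  rwa [map_add, map_add, ← eI_empty, coef_eI, coef_eI, if_neg (empty_ne_univ hN).symm,
    if_pos rfl, zero_add] at h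

lemma coef_univ_add_coef_univ (hN : N ≠ 0) (hsum : a + b = eI Finset.univ + 1) :
    coef Finset.univ a + coef Finset.univ b = 1 := by
  have h := congrArg (coef Finset.univ) hsum
  rwa [map_add, map_add, ← eI_empty, coef_eI, coef_eI, if_neg (empty_ne_univ hN),
    if_pos rfl, add_zero] at h

lemma coef_empty_eq_zero_or_of_add_eq (hN : Even N) (h6 : 6 ≤ N) (ha : purespinor a)
    (hb : purespinor b) (hsum : a + b = eI Finset.univ + 1) : coef ∅ a = 0 ∨ coef ∅ b = 0 := by
  by_contra! h
  obtain ⟨ha₀, hb₀⟩ := h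
  have hb₂ := gradePart_eq_neg_of_add_eq hsum (k := 2) (by omega) (by omega)
  have hb₄ := gradePart_eq_neg_of_add_eq hsum (k := 4) (by omega) (by omega)
  have hωa := gradePart_two_pow_succ ha ha₀ 1
  have hωb := gradePart_two_pow_succ hb hb₀ 1
  rw [hb₂, neg_sq, hb₄, smul_neg] at hωb
  have h₄ : gradePart 4 a = 0 := by
    have h := hωa.symm.trans hωb
    rw [eq_neg_iff_add_eq_zero, ← add_smul] at h
    refine (smul_eq_zero.1 h).resolve_left ?_
    have := coef_empty_add_coef_empty (by omega) hsum
    norm_num [Nat.factorial, ← mul_add, this]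
  have hsq : gradePart 2 a ^ 2 = 0 := by rw [hωa, h₄, smul_zero]
  have htop := congrArg (gradePart N) hsum
  rw [map_add, gradePart_top_eq_zero_of_sq_eq_zero hN (by omega) ha ha₀ hsq,
    gradePart_top_eq_zero_of_sq_eq_zero hN (by omega) hb hb₀ (by rw [hb₂, neg_sq, hsq]),
    map_add, ← eI_empty, gradePart_eI, gradePart_eI, if_pos (by simp),
    if_neg (by simp; omega), add_zero, add_zero] at htop
  exact eI_ne_zero _ htop.symm

lemma eq_zero_of_mem_ker_psi (hN : Even N) (h6 : 6 ≤ N) (ha : purespinor a)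
    (hsum : a + b = eI Finset.univ + 1) (hb₀ : coef ∅ b = 0) {f : Evec N}
    (hv : (0, f) ∈ LinearMap.ker (psi b)) : f = 0 := by
  have hω : contractLeft (toDualMap N f) (gradePart 2 a) = 0 := by
    have h := contractLeft_gradePart_two_eq_zero_of_mem_ker hb₀ hv
    rwa [gradePart_eq_neg_of_add_eq hsum (by omega) (by omega), map_neg, neg_eq_zero] at h
  have htop := contractLeft_gradePart_of_mem_ker hv (N - 2)
  rw [map_zero, zero_mul, neg_zero, show N - 2 + 2 = N by omega, gradePart_top, map_smul,
    smul_eq_zero] at htop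
  rcases htop with hc | htop
  · have ha₀ : coef ∅ a = 1 := by simpa [hb₀] using coef_empty_add_coef_empty (by omega) hsum
    have haN : coef Finset.univ a = 1 := by
      simpa [hc] using coef_univ_add_coef_univ (by omega) hsum
    obtain ⟨m, hm⟩ := hN
    have h := congrArg (contractLeft (toDualMap N f))
      (gradePart_two_pow_succ ha (by simp [ha₀]) (m - 1))
    rw [ExteriorAlgebra.contractLeft_pow_succ_of_mem_evenOdd_zero _ (gradePart_two_mem_evenOdd a),
      hω, zero_mul, smul_zero, show 2 * (m - 1 + 1) = N by omega, gradePart_top, haN,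
      one_smul, map_smul, eq_comm, smul_eq_zero] at h
    exact (contractLeft_eI_univ_eq_zero_iff f).1
      (h.resolve_left (by simp [ha₀, Nat.factorial_ne_zero]))
  · exact (contractLeft_eI_univ_eq_zero_iff f).1 htop

lemma eq_one_of_coef_empty_eq_zero (hN : Even N) (h6 : 6 ≤ N) (ha : purespinor a)
    (hb : purespinor b) (hsum : a + b = eI Finset.univ + 1) (hb₀ : coef ∅ b = 0) : a = 1 := by
  have ha₀ : coef ∅ a = 1 := by simpa [hb₀] using coef_empty_add_coef_empty (by omega) hsum
  have hb₂ := gradePart_eq_neg_of_add_eq hsum (k := 2) (by omega) (by omega)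
  have hb₄ : ∃ c : ℂ, gradePart 4 b = c • gradePart 2 b ^ 2 := by
    refine ⟨-2⁻¹, ?_⟩
    rw [gradePart_eq_neg_of_add_eq hsum (by omega) (by omega), hb₂, neg_sq,
      gradePart_two_pow_succ ha (by simp [ha₀]) 1, ha₀, smul_smul]
    norm_num [Nat.factorial]
  have hinj : ∀ v ∈ LinearMap.ker (psi b), LinearMap.fst ℂ _ _ v = 0 → v = 0 := by
    rintro ⟨e, f⟩ hv (rfl : e = 0)
    rw [eq_zero_of_mem_ker_psi hN h6 ha hsum hb₀ hv, Prod.mk_zero_zero]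
  have hω : gradePart 2 a = 0 := by
    refine eq_zero_of_forall_ι_mul_eq_zero (by omega) (gradePart_mem_grade 2 a) fun e => ?_
    obtain ⟨⟨e, f⟩, hv, rfl⟩ :=
      Submodule.exists_mem_apply_eq_of_finrank_eq _ (finrank_ker_psi hb) hinj e
    have h := ι_mul_gradePart_two_eq_zero_of_mem_ker hb₀ hb₄ hv
    rwa [hb₂, mul_neg, neg_eq_zero] at h
  rw [eq_algebraMap_of_gradePart_two_eq_zero ha (by simp [ha₀]) hω, ha₀, map_one]

theorem eq_or_eq_of_add_eq (hN : Even N) (h6 : 6 ≤ N) (ha : purespinor a) (hb : purespinor b)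
    (hsum : a + b = eI Finset.univ + 1) :
    (a = eI Finset.univ ∧ b = 1) ∨ (a = 1 ∧ b = eI Finset.univ) := by
  rcases coef_empty_eq_zero_or_of_add_eq hN h6 ha hb hsum with h | h
  · have hb₁ := eq_one_of_coef_empty_eq_zero hN h6 hb ha (by rw [add_comm, hsum]) h
    rw [hb₁] at hsum
    exact Or.inl ⟨add_right_cancel hsum, hb₁⟩
  · have ha₁ := eq_one_of_coef_empty_eq_zero hN h6 ha hb hsum h
    rw [ha₁, add_comm] at hsum
    exact Or.inr ⟨ha₁, add_right_cancel hsum⟩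

end Identifiability

end CliffordApolarity

/-- Clifford apolarity for the general point of `σ₂(S_N^+)` (`N` even,
`N ≥ 6`).  The kernel of the apolarity map `Φ_{e_{[N]}+1}` is spanned by the dual
vectors `f_I` with `|I|` odd and `3 ≤ |I| ≤ N-3`; a pure spinor `[a]` lies in the
common zero locus of the corresponding sections (i.e. `⟨f_I, v ⋅ a⟩ = 0` for all such
`I` and all `v ∈ V`) exactly when `[a] ∈ {[e_{[N]}], [1]}`.  Consequently the point
`[e_{[N]} + 1]` is identifiable: its decomposition into two pure spinors is unique. -/
theorem stmt16 (N : ℕ) (hN : Even N) (h6 : 6 ≤ N) :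
    (∀ a : ExtE N,
      (purespinor a ∧ ∀ I : Finset (Fin N), Odd I.card → 3 ≤ I.card → I.card ≤ N - 3 →
          ∀ v : Vsp N, coefI I (psi a v) = 0) ↔
        (∃ c : ℂ, c ≠ 0 ∧
          (a = c • eI (Finset.univ : Finset (Fin N)) ∨ a = algebraMap ℂ (ExtE N) c))) ∧
    (∀ a b : ExtE N, purespinor a → purespinor b →
      a + b = eI (Finset.univ : Finset (Fin N)) + 1 →
      (a = eI (Finset.univ : Finset (Fin N)) ∧ b = 1) ∨
        (a = 1 ∧ b = eI (Finset.univ : Finset (Fin N)))) :=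
  ⟨CliffordApolarity.purespinor_and_inApolarZeroLocus_iff hN h6,
    fun _ _ => CliffordApolarity.eq_or_eq_of_add_eq hN h6⟩
end
end
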